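/- arXiv:2602.16071 — 6 statements merged into one kernel-verified Lean document; each statement's English description precedes it below -/
import Mathlib

section
/- Suppose u(s) = Σ_{i=1}^n g_i(s_0, s_i) represents a family of preferences over S_0. If there exist a partition {A, B} of the opponents, actions s_0, s'_0 ∈ S_0, and opponent sub-profiles s_A, s'_A, s_B, s'_B such that u(s_0, s_A, s_B) ≥ u(s'_0, s_A, s_B), u(s'_0, s'_A, s_B) ≥ u(s_0, s'_A, s_B), u(s'_0, s_A, s'_B) ≥ u(s_0, s_A, s'_B), and u(s_0, s'_A, s'_B) ≥ u(s'_0, s'_A, s'_B), then all four of these inequalities are in fact equalities. -/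
/-!
For fixed actions `s0, s0'`, the utility gain `u s0 - u s0'` at the profile `(s_A, s_B)` splits as
`a s_A + b s_B`, a part depending only on the opponents in `A` plus one depending only on those in
`B`. Hence the gains at the two "diagonal" profiles `(sA, sB), (sA', sB')` add up to the same number
as those at the two "off-diagonal" ones `(sA', sB), (sA, sB')`. The hypotheses say that the former
are nonnegative and the latter nonpositive, so all four vanish.
-/

open Finset

theorem Finset.sum_apply_ite_mem {ι M : Type*} [Fintype ι] [DecidableEq ι] [AddCommMonoid M]
    {S : ι → Type*} (A : Finset ι) (f : ∀ i, S i → M) (x y : ∀ i, S i) :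
    ∑ i, f i (if i ∈ A then x i else y i) = ∑ i ∈ A, f i (x i) + ∑ i ∈ Aᶜ, f i (y i) := by
  rw [← sum_add_sum_compl A]
  congr 1 <;> refine sum_congr rfl fun i hi => ?_
  · rw [if_pos hi]
  · rw [if_neg (mem_compl.mp hi)]

theorem eq_zero_of_add_separable_of_sign_pattern {α β R : Type*} [AddCommGroup R] [LinearOrder R]
    [IsOrderedAddMonoid R] (D : α → β → R) (a : α → R) (b : β → R)
    (hD : ∀ x y, D x y = a x + b y) {x x' : α} {y y' : β}
    (h1 : 0 ≤ D x y) (h2 : D x' y ≤ 0) (h3 : D x y' ≤ 0) (h4 : 0 ≤ D x' y') :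
    D x y = 0 ∧ D x' y = 0 ∧ D x y' = 0 ∧ D x' y' = 0 := by
  have rectangle : D x y + D x' y' = D x' y + D x y' := by simp only [hD]; abel
  have diagonal : D x y + D x' y' = 0 :=
    le_antisymm (rectangle ▸ add_nonpos h2 h3) (add_nonneg h1 h4)
  obtain ⟨e1, e4⟩ := (add_eq_zero_iff_of_nonneg h1 h4).1 diagonal
  have off_diagonal : D x' y + D x y' = 0 := rectangle ▸ diagonal
  have e2 : D x' y = 0 :=
    le_antisymm h2 (by rw [eq_neg_of_add_eq_zero_left off_diagonal]; exact neg_nonneg.2 h3)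
  rw [e2, zero_add] at off_diagonal
  exact ⟨e1, e2, off_diagonal, e4⟩

/-- The four comparisons in a short balanced sequence force equalities
for additively separable utilities. -/
theorem stmt_3 {n : ℕ} {S0 : Type*} {S : Fin n → Type*}
    (g : ∀ i, S0 → S i → ℝ)
    (u : S0 → (∀ i, S i) → ℝ)
    (hu : ∀ s0 sp, u s0 sp = ∑ i, g i s0 (sp i))
    (A : Finset (Fin n))
    (combine : (∀ i, S i) → (∀ i, S i) → ∀ i, S i)
    (hcombine : ∀ a b i, combine a b i = if i ∈ A then a i else b i)
    (s0 s0' : S0) (sA sA' sB sB' : ∀ i, S i)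
    (h1 : u s0 (combine sA sB) ≥ u s0' (combine sA sB))
    (h2 : u s0' (combine sA' sB) ≥ u s0 (combine sA' sB))
    (h3 : u s0' (combine sA sB') ≥ u s0 (combine sA sB'))
    (h4 : u s0 (combine sA' sB') ≥ u s0' (combine sA' sB')) :
    u s0 (combine sA sB) = u s0' (combine sA sB) ∧
    u s0' (combine sA' sB) = u s0 (combine sA' sB) ∧
    u s0' (combine sA sB') = u s0 (combine sA sB') ∧
    u s0 (combine sA' sB') = u s0' (combine sA' sB') := by
  have gain_separable : ∀ x y, u s0 (combine x y) - u s0' (combine x y) =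
      ∑ i ∈ A, (g i s0 (x i) - g i s0' (x i)) + ∑ i ∈ Aᶜ, (g i s0 (y i) - g i s0' (y i)) := by
    intro x y
    simp only [hu, hcombine, sum_apply_ite_mem, sum_sub_distrib]
    abel
  obtain ⟨e1, e2, e3, e4⟩ := eq_zero_of_add_separable_of_sign_pattern _ _ _ gain_separable
    (sub_nonneg.2 h1) (sub_nonpos.2 h2) (sub_nonpos.2 h3) (sub_nonneg.2 h4)
  exact ⟨sub_eq_zero.1 e1, (sub_eq_zero.1 e2).symm, (sub_eq_zero.1 e3).symm, sub_eq_zero.1 e4⟩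
end

section
/- Suppose g_j, g_k : ℝ × ℝ → ℝ are continuous and there exists δ ∈ ℝ such that for all s, s', a, b, x ∈ ℝ: g_j(s', a) − g_j(s, a) + g_k(s', b) − g_k(s, b) = g_j(s', a − δx) − g_j(s, a − δx) + g_k(s', b + x) − g_k(s, b + x). Then there exist functions f_k, γ_k, v_k : ℝ → ℝ such that g_k(s, b) = f_k(s) + γ_k(b) + v_k(s)·b for all s, b ∈ ℝ. -/
/-!
Fix `s`. Comparing the substitution identity at `b` with the one at `b = 0` shows that the
increment `d (b + x) - d b` of `d b := gk s b - gk 0 b` does not depend on `b`, so `d - d 0`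
is additive. Being continuous, it is linear, which makes `gk s b - gk 0 b` affine in `b`.
-/

theorem Real.eq_add_mul_of_increment_eq {d : ℝ → ℝ} (hd : Continuous d)
    (hinc : ∀ b x, d (b + x) - d b = d x - d 0) (x : ℝ) :
    d x = d 0 + (d 1 - d 0) * x := by
  let φ : ℝ →+ ℝ := AddMonoidHom.mk' (fun y => d y - d 0) fun b y => by
    linear_combination hinc b y
  have hlin := map_real_smul φ (hd.sub continuous_const) x 1
  simp only [φ, AddMonoidHom.mk'_apply, smul_eq_mul, mul_one] at hlin
  linear_combination hlin

theorem increment_eq_of_constant_rate_of_substitution (gj gk : ℝ → ℝ → ℝ) (δ : ℝ)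
    (hcrs : ∀ s s' a b x : ℝ,
      gj s' a - gj s a + gk s' b - gk s b
        = gj s' (a - δ * x) - gj s (a - δ * x) + gk s' (b + x) - gk s (b + x))
    (s s' b x : ℝ) :
    (gk s' (b + x) - gk s (b + x)) - (gk s' b - gk s b)
      = (gk s' x - gk s x) - (gk s' 0 - gk s 0) := by
  have hx := hcrs s s' 0 0 x
  rw [zero_add] at hx
  linear_combination hx - hcrs s s' 0 b x

theorem stmt_9_general (gj gk : ℝ → ℝ → ℝ)
    (hk : Continuous fun p : ℝ × ℝ => gk p.1 p.2)
    (δ : ℝ)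
    (hcrs : ∀ s s' a b x : ℝ,
      gj s' a - gj s a + gk s' b - gk s b
        = gj s' (a - δ * x) - gj s (a - δ * x) + gk s' (b + x) - gk s (b + x)) :
    ∃ f γ v : ℝ → ℝ, ∀ s b : ℝ, gk s b = f s + γ b + v s * b := by
  have hsection (s : ℝ) : Continuous (gk s) := hk.comp (Continuous.prodMk_right s)
  refine ⟨fun s => gk s 0 - gk 0 0, gk 0, fun s => (gk s 1 - gk 0 1) - (gk s 0 - gk 0 0),
    fun s b => ?_⟩
  have haffine := Real.eq_add_mul_of_increment_eq ((hsection s).sub (hsection 0))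
    (increment_eq_of_constant_rate_of_substitution gj gk δ hcrs 0 s) b
  simp only [Pi.sub_apply] at haffine
  linear_combination haffine

/-- A constant rate of substitution forces the additively separable term to be
affine in the opponent's action. -/
theorem stmt_9 (gj gk : ℝ → ℝ → ℝ)
    (hj : Continuous fun p : ℝ × ℝ => gj p.1 p.2)
    (hk : Continuous fun p : ℝ × ℝ => gk p.1 p.2)
    (δ : ℝ)
    (hcrs : ∀ s s' a b x : ℝ,
      gj s' a - gj s a + gk s' b - gk s b
        = gj s' (a - δ * x) - gj s (a - δ * x) + gk s' (b + x) - gk s (b + x)) :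
    ∃ f γ v : ℝ → ℝ, ∀ s b : ℝ, gk s b = f s + γ b + v s * b :=
  stmt_9_general gj gk hk δ hcrs
end

section
/- Motzkin transposition (rational version): Let A ∈ ℚ^{a×d}, B ∈ ℚ^{b×d}, C ∈ ℚ^{c×d}. Exactly one of the following holds: (1) there exists x ∈ ℝ^d with Ax ≫ 0 (all entries strictly positive), Bx ≥ 0 componentwise, and Cx = 0; (2) there exist vectors p ∈ ℤ^a with p ≥ 0 and p ≠ 0, q ∈ ℤ^b with q ≥ 0, and r ∈ ℤ^c such that pᵀA + qᵀB + rᵀC = 0. -/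
open Matrix Finset

/-!
Fourier–Motzkin elimination gives the inhomogeneous Farkas alternative over any ordered field:
either `b ≤ M x` is solvable, or some `y ≥ 0` has `yᵀM = 0` and `yᵀb > 0`. To eliminate the
variable `x₀`, whose coefficients form the column `c`, keep the rows with `c i = 0` and replace
the others by the combinations `c p • row n - c n • row p` for `c p > 0 > c n`; these are
nonnegative combinations of the rows in which `x₀` cancels. A solution of the reduced system
extends, since every lower bound `-r p / c p` imposed on `x₀` lies below every upper bound
`r n / -c n`, and a certificate of the reduced system pulls back through the nonnegative
elimination matrix.

Motzkin's alternative is the Farkas alternative for `A x ≥ 1, B x ≥ 0, C x ≥ 0, -C x ≥ 0`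
(by homogeneity `A x ≫ 0` may be normalised to `A x ≥ 1`). Over `ℚ` a certificate is scaled to
an integral one, and a rational solution is a real one. The alternatives exclude each other
because pairing `pᵀA + qᵀB + rᵀC = 0` with `x` gives `0 = pᵀAx + qᵀBx + rᵀCx > 0`.
-/

theorem Finset.exists_between_of_forall_le {α : Type*} [LinearOrder α] [Nonempty α]
    {s t : Finset α} (h : ∀ a ∈ s, ∀ b ∈ t, a ≤ b) :
    ∃ x, (∀ a ∈ s, a ≤ x) ∧ ∀ b ∈ t, x ≤ b := by
  rcases s.eq_empty_or_nonempty with rfl | hs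
  · obtain ⟨x, hx⟩ := t.bddBelow
    exact ⟨x, by simp, fun b hb => hx hb⟩
  · exact ⟨s.max' hs, fun a ha => s.le_max' a ha,
      fun b hb => s.max'_le hs _ fun a ha => h a ha b hb⟩

namespace FourierMotzkin

section CommRing

variable {K : Type*} [CommRing K] [LinearOrder K] {ι : Type*} [DecidableEq ι]

abbrev Index (c : ι → K) := {i // c i = 0} ⊕ ({i // 0 < c i} × {i // c i < 0})

def elimMatrix (c : ι → K) : Matrix (Index c) ι K :=
  of <| Sum.elim (fun z => Pi.single z.1 1)
    (fun pn => Pi.single pn.2.1 (c pn.1) + Pi.single pn.1.1 (-c pn.2))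

@[simp] lemma elimMatrix_inl (c : ι → K) (z : {i // c i = 0}) :
    elimMatrix c (.inl z) = Pi.single z.1 1 := rfl

@[simp] lemma elimMatrix_inr (c : ι → K) (p : {i // 0 < c i}) (n : {i // c i < 0}) :
    elimMatrix c (.inr (p, n)) = Pi.single n.1 (c p) + Pi.single p.1 (-c n) := rfl

lemma elimMatrix_nonneg [IsStrictOrderedRing K] (c : ι → K) (j : Index c) :
    0 ≤ elimMatrix c j := by
  rcases j with z | ⟨p, n⟩
  · exact Pi.single_nonneg.mpr zero_le_one
  · exact add_nonneg (Pi.single_nonneg.mpr p.2.le) (Pi.single_nonneg.mpr (neg_nonneg.mpr n.2.le))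

variable [Fintype ι]

lemma elimMatrix_mulVec_inl (c r : ι → K) (z : {i // c i = 0}) :
    (elimMatrix c *ᵥ r) (.inl z) = r z := by
  simp [mulVec]

lemma elimMatrix_mulVec_inr (c r : ι → K) (p : {i // 0 < c i}) (n : {i // c i < 0}) :
    (elimMatrix c *ᵥ r) (.inr (p, n)) = c p * r n - c n * r p := by
  change elimMatrix c (.inr (p, n)) ⬝ᵥ r = _
  rw [elimMatrix_inr, add_dotProduct, single_dotProduct, single_dotProduct]
  ring

lemma elimMatrix_mulVec_self (c : ι → K) : elimMatrix c *ᵥ c = 0 := by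
  ext (z | ⟨p, n⟩)
  · simp [elimMatrix_mulVec_inl, z.2]
  · simp [elimMatrix_mulVec_inr, mul_comm]

end CommRing

section Field

variable {K : Type*} [Field K] [LinearOrder K] [IsStrictOrderedRing K] {ι : Type*}
  [DecidableEq ι] [Fintype ι]

lemma exists_add_smul_nonneg (c r : ι → K) (h : 0 ≤ elimMatrix c *ᵥ r) :
    ∃ t : K, 0 ≤ r + t • c := by
  obtain ⟨t, hlow, hupp⟩ := Finset.exists_between_of_forall_le
      (s := univ.image fun p : {i // 0 < c i} => -r p / c p)
      (t := univ.image fun n : {i // c i < 0} => r n / -c n) <| by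
    simp only [mem_image, mem_univ, true_and, forall_exists_index, forall_apply_eq_imp_iff]
    intro p n
    have hpn := h (.inr (p, n))
    rw [Pi.zero_apply, elimMatrix_mulVec_inr] at hpn
    rw [div_le_div_iff₀ p.2 (neg_pos.mpr n.2)]
    linarith
  refine ⟨t, fun i => ?_⟩
  simp only [mem_image, mem_univ, true_and, forall_exists_index,
    forall_apply_eq_imp_iff] at hlow hupp
  rcases lt_trichotomy (c i) 0 with hneg | hzero | hpos
  · have := hupp ⟨i, hneg⟩
    rw [le_div_iff₀ (neg_pos.mpr hneg)] at this
    simp only [Pi.zero_apply, Pi.add_apply, Pi.smul_apply, smul_eq_mul]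
    linarith
  · simpa [hzero, elimMatrix_mulVec_inl] using h (.inl ⟨i, hzero⟩)
  · have := hlow ⟨i, hpos⟩
    rw [div_le_iff₀ hpos] at this
    simp only [Pi.zero_apply, Pi.add_apply, Pi.smul_apply, smul_eq_mul]
    linarith

end Field

end FourierMotzkin

open FourierMotzkin in
theorem exists_le_mulVec_or_exists_vecMul_eq_zero {K : Type*} [Field K] [LinearOrder K]
    [IsStrictOrderedRing K] {d : ℕ} {ι : Type*} [Fintype ι] (M : Matrix ι (Fin d) K)
    (b : ι → K) : (∃ x, b ≤ M *ᵥ x) ∨ ∃ y, 0 ≤ y ∧ y ᵥ* M = 0 ∧ 0 < y ⬝ᵥ b := by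
  classical
  induction d generalizing ι with
  | zero =>
    by_cases hb : b ≤ 0
    · exact .inl ⟨0, by simpa using hb⟩
    · obtain ⟨i, hi⟩ : ∃ i, 0 < b i := by simpa [Pi.le_def] using hb
      exact .inr ⟨Pi.single i 1, Pi.single_nonneg.mpr zero_le_one, Subsingleton.elim _ _,
        by simpa using hi⟩
  | succ d ih =>
    set c : ι → K := fun i => M i 0
    set T : Matrix ι (Fin d) K := of fun i => vecTail (M i)
    set E := elimMatrix c
    have hM : ∀ t x, M *ᵥ vecCons t x = t • c + T *ᵥ x := fun t x => mulVec_cons M t x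
    rcases ih (E * T) (E *ᵥ b) with ⟨x, hx⟩ | ⟨y, hy, hyM, hyb⟩
    · obtain ⟨t, ht⟩ := exists_add_smul_nonneg c (T *ᵥ x - b) <| by
        rw [mulVec_sub, mulVec_mulVec]
        exact sub_nonneg.mpr hx
      refine .inl ⟨vecCons t x, fun i => ?_⟩
      have := ht i
      simp only [hM, Pi.add_apply, Pi.smul_apply, Pi.sub_apply, Pi.zero_apply] at this ⊢
      linarith
    · refine .inr ⟨y ᵥ* E,
        fun i => dotProduct_nonneg_of_nonneg hy fun j => elimMatrix_nonneg c j i, ?_,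
        by rwa [← dotProduct_mulVec]⟩
      -- The first column of `E * M` is `E *ᵥ c = 0`; the remaining columns form `E * T`.
      ext k
      refine Fin.cases ?_ (fun k => ?_) k
      · change y ᵥ* E ⬝ᵥ c = 0
        rw [← dotProduct_mulVec, elimMatrix_mulVec_self, dotProduct_zero]
      · change (y ᵥ* E ᵥ* T) k = 0
        rw [vecMul_vecMul, hyM, Pi.zero_apply]

lemma exists_pos_nat_smul_eq_intCast {ι : Type*} [Fintype ι] (y : ι → ℚ) :
    ∃ (N : ℕ) (z : ι → ℤ), 0 < N ∧ (fun i => (z i : ℚ)) = (N : ℚ) • y := by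
  classical
  refine ⟨∏ i, (y i).den, fun i => (y i).num * ∏ j ∈ Finset.univ.erase i, ((y j).den : ℤ),
    Finset.prod_pos fun i _ => (y i).den_pos, funext fun i => ?_⟩
  rw [← Finset.mul_prod_erase _ _ (mem_univ i)]
  push_cast
  rw [← Rat.den_mul_eq_num, Pi.smul_apply, smul_eq_mul]
  ring

theorem exists_le_mulVec_or_exists_int_vecMul_eq_zero {d : ℕ} {ι : Type*} [Fintype ι]
    (M : Matrix ι (Fin d) ℚ) (b : ι → ℚ) :
    (∃ x, b ≤ M *ᵥ x) ∨
      ∃ z : ι → ℤ, 0 ≤ z ∧ (fun i => (z i : ℚ)) ᵥ* M = 0 ∧ 0 < (fun i => (z i : ℚ)) ⬝ᵥ b := by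
  refine (exists_le_mulVec_or_exists_vecMul_eq_zero M b).imp_right ?_
  rintro ⟨y, hy, hyM, hyb⟩
  obtain ⟨N, z, hN, hz⟩ := exists_pos_nat_smul_eq_intCast y
  have hN' : (0 : ℚ) < N := Nat.cast_pos.mpr hN
  refine ⟨z, fun i => ?_, by rw [hz, smul_vecMul, hyM, smul_zero], ?_⟩
  · have : (0 : ℚ) ≤ z i := by
      rw [congrFun hz i, Pi.smul_apply]
      exact smul_nonneg hN'.le (hy i)
    exact_mod_cast this
  · rw [hz, smul_dotProduct, smul_eq_mul]
    exact mul_pos hN' hyb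

theorem motzkin_transposition_rat {α β γ : Type*} [Fintype α] [Fintype β] [Fintype γ]
    {d : ℕ} (A : Matrix α (Fin d) ℚ) (B : Matrix β (Fin d) ℚ) (C : Matrix γ (Fin d) ℚ) :
    (∃ x, (∀ i, 0 < (A *ᵥ x) i) ∧ (∀ i, 0 ≤ (B *ᵥ x) i) ∧ C *ᵥ x = 0) ∨
    ∃ (p : α → ℤ) (q : β → ℤ) (r : γ → ℤ), (∀ i, 0 ≤ p i) ∧ p ≠ 0 ∧ (∀ i, 0 ≤ q i) ∧
      (fun i => (p i : ℚ)) ᵥ* A + (fun i => (q i : ℚ)) ᵥ* B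
        + (fun i => (r i : ℚ)) ᵥ* C = 0 := by
  rcases exists_le_mulVec_or_exists_int_vecMul_eq_zero (fromRows A (fromRows B (fromRows C (-C))))
      (Sum.elim 1 0) with ⟨x, hx⟩ | ⟨z, hz, hzM, hzb⟩
  · simp only [fromRows_mulVec, Pi.le_def, Sum.forall, Sum.elim_inl, Sum.elim_inr, Pi.one_apply,
      Pi.zero_apply, neg_mulVec, Pi.neg_apply, neg_nonneg] at hx
    obtain ⟨hA, hB, hC, hC'⟩ := hx
    exact .inl ⟨x, fun i => one_pos.trans_le (hA i), hB,
      funext fun k => le_antisymm (hC' k) (hC k)⟩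
  · refine .inr ⟨fun i => z (.inl i), fun j => z (.inr (.inl j)),
      fun k => z (.inr (.inr (.inl k))) - z (.inr (.inr (.inr k))), fun i => hz _, ?_,
      fun j => hz _, ?_⟩
    · rintro hp
      have : ∀ i, z (.inl i) = 0 := congrFun hp
      simp [dotProduct, this] at hzb
    · simp only [vecMul_fromRows, vecMul_neg, Function.comp_def] at hzM
      push_cast
      rw [← Pi.sub_def, sub_vecMul]
      linear_combination hzM

theorem vecMul_add_vecMul_add_vecMul_ne_zero {R : Type*} [CommRing R] [PartialOrder R]
    [IsStrictOrderedRing R] {α β γ δ : Type*} [Fintype α] [Fintype β] [Fintype γ] [Fintype δ]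
    {A : Matrix α δ R} {B : Matrix β δ R} {C : Matrix γ δ R} {x : δ → R}
    (hA : ∀ i, 0 < (A *ᵥ x) i) (hB : ∀ i, 0 ≤ (B *ᵥ x) i) (hC : C *ᵥ x = 0)
    {p : α → R} {q : β → R} (r : γ → R) (hp : ∀ i, 0 ≤ p i) (hp0 : p ≠ 0)
    (hq : ∀ j, 0 ≤ q j) :
    p ᵥ* A + q ᵥ* B + r ᵥ* C ≠ 0 := by
  intro h
  have hsum := congrArg (· ⬝ᵥ x) h
  simp only [add_dotProduct, ← dotProduct_mulVec, hC, dotProduct_zero, add_zero,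
    zero_dotProduct] at hsum
  obtain ⟨i, hi⟩ := Function.ne_iff.mp hp0
  have hpA : 0 < p ⬝ᵥ A *ᵥ x := sum_pos' (fun j _ => mul_nonneg (hp j) (hA j).le)
    ⟨i, mem_univ i, mul_pos ((hp i).lt_of_ne' hi) (hA i)⟩
  have hqB : 0 ≤ q ⬝ᵥ B *ᵥ x := dotProduct_nonneg_of_nonneg (fun j => hq j) hB
  linarith

section RatCast

variable {K : Type*} [DivisionRing K] [CharZero K] {m n : Type*}

lemma ratCast_mulVec [Fintype n] (M : Matrix m n ℚ) (v : n → ℚ) :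
    (M.map (↑) : Matrix m n K) *ᵥ (fun k => (v k : K)) = fun i => ((M *ᵥ v) i : K) :=
  funext fun i => ((Rat.castHom K).map_mulVec M v i).symm

lemma ratCast_vecMul [Fintype m] (v : m → ℚ) (M : Matrix m n ℚ) :
    (fun i => (v i : K)) ᵥ* (M.map (↑) : Matrix m n K) = fun j => ((v ᵥ* M) j : K) :=
  funext fun j => ((Rat.castHom K).map_vecMul M v j).symm

end RatCast

/-- Motzkin's transposition theorem, rational version. -/
theorem stmt_11 {a b c d : ℕ}
    (A : Matrix (Fin a) (Fin d) ℚ) (B : Matrix (Fin b) (Fin d) ℚ)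
    (C : Matrix (Fin c) (Fin d) ℚ) :
    Xor'
      (∃ x : Fin d → ℝ,
        (∀ i, 0 < ((A.map fun q : ℚ => (q : ℝ)) *ᵥ x) i) ∧
        (∀ i, 0 ≤ ((B.map fun q : ℚ => (q : ℝ)) *ᵥ x) i) ∧
        (C.map fun q : ℚ => (q : ℝ)) *ᵥ x = 0)
      (∃ (p : Fin a → ℤ) (q : Fin b → ℤ) (r : Fin c → ℤ),
        (∀ i, 0 ≤ p i) ∧ p ≠ 0 ∧ (∀ i, 0 ≤ q i) ∧
        (fun i => (p i : ℚ)) ᵥ* A + (fun i => (q i : ℚ)) ᵥ* B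
          + (fun i => (r i : ℚ)) ᵥ* C = 0) := by
  refine (xor_iff_or_and_not_and _ _).mpr ⟨(motzkin_transposition_rat A B C).imp_left ?_, ?_⟩
  · rintro ⟨x, hA, hB, hC⟩
    refine ⟨fun k => (x k : ℝ), ?_, ?_, ?_⟩ <;> rw [ratCast_mulVec]
    · exact fun i => Rat.cast_pos.mpr (hA i)
    · exact fun i => Rat.cast_nonneg.mpr (hB i)
    · exact funext fun i => by simp [hC]
  · rintro ⟨⟨x, hA, hB, hC⟩, p, q, r, hp, hp0, hq, h⟩
    refine vecMul_add_vecMul_add_vecMul_ne_zero (p := fun i => ((p i : ℚ) : ℝ))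
      (q := fun j => ((q j : ℚ) : ℝ)) hA hB hC (fun k => ((r k : ℚ) : ℝ))
      (fun i => by exact_mod_cast hp i) ?_ (fun j => by exact_mod_cast hq j) ?_
    · exact fun h0 => hp0 (funext fun i => by simpa using congrFun h0 i)
    · simp only [ratCast_vecMul]
      ext j
      simp only [Pi.add_apply, Pi.zero_apply]
      exact_mod_cast congrFun h j
end

section
/- If a family of preference orders over a finite own-action set, indexed by finitely many opponent profiles, admits no balanced sequence, then it admits a strategically separable representation: there exist functions g_i : S_0 × S_i → ℝ such that for all s_0, s'_0 ∈ S_0 and all opponent profiles s_+, s_0 ≿_{s_+} s'_0 if and only if Σ_{i=1}^n g_i(s_0, s_i) ≥ Σ_{i=1}^n g_i(s'_0, s_i). -/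
namespace Stmt13

variable {E : Type*} [Fintype E]

def dot (y x : E → ℚ) : ℚ := ∑ e, y e * x e

lemma dot_sub (y x z : E → ℚ) : dot y (x - z) = dot y x - dot y z := by
  simp [dot, mul_sub, Finset.sum_sub_distrib]

lemma dot_smul (y : E → ℚ) (a : ℚ) (x : E → ℚ) : dot y (a • x) = a * dot y x := by
  simp only [dot, Pi.smul_apply, smul_eq_mul, Finset.mul_sum]
  exact Finset.sum_congr rfl fun i _ => by ring

lemma dot_neg (y x : E → ℚ) : dot y (-x) = - dot y x := by
  simp [dot]

lemma dot_sum {ι : Type*} (s : Finset ι) (Y : ι → E → ℚ) (x : E → ℚ) :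
    dot (∑ t ∈ s, Y t) x = ∑ t ∈ s, dot (Y t) x := by
  simp only [dot, Finset.sum_apply, Finset.sum_mul]
  exact Finset.sum_comm

lemma dot_left_sub_smul (g y : E → ℚ) (a : ℚ) (x : E → ℚ) :
    dot (g - a • y) x = dot g x - a * dot y x := by
  simp only [dot, Pi.sub_apply, Pi.smul_apply, smul_eq_mul, sub_mul,
    Finset.sum_sub_distrib, Finset.mul_sum]
  congr 1
  exact Finset.sum_congr rfl fun i _ => by ring

theorem farkas : ∀ (k : ℕ) (v : Fin k → E → ℚ) (b : E → ℚ),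
    (∃ c : Fin k → ℚ, (∀ i, 0 ≤ c i) ∧ ∑ i, c i • v i = b) ∨
    (∃ y : E → ℚ, (∀ i, 0 ≤ dot y (v i)) ∧ dot y b < 0) := by
  intro k
  induction k with
  | zero =>
    intro v b
    by_cases hb : b = 0
    · exact .inl ⟨0, fun i => le_refl _, by simp [hb]⟩
    · refine .inr ⟨-b, fun i => i.elim0, ?_⟩
      have hpos : 0 < dot b b := by
        have hne : ∃ e, b e ≠ 0 := by
          by_contra h; push_neg at h; exact hb (funext h)
        obtain ⟨e, he⟩ := hne
        exact Finset.sum_pos' (fun e _ => mul_self_nonneg _)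
          ⟨e, Finset.mem_univ e, mul_self_pos.mpr he⟩
      have hneg : dot (-b) b = - dot b b := by simp [dot]
      rw [hneg]; linarith
  | succ k ih =>
    intro v b
    rcases ih (fun i => v i.castSucc) b with ⟨c, hc, hsum⟩ | ⟨y, hy, hyb⟩
    · refine .inl ⟨Fin.snoc c 0, ?_, ?_⟩
      · intro i
        refine Fin.lastCases ?_ ?_ i <;> simp [Fin.snoc_last, Fin.snoc_castSucc, hc]
      · rw [Fin.sum_univ_castSucc]
        simp [Fin.snoc_castSucc, Fin.snoc_last, hsum]
    · by_cases hk : 0 ≤ dot y (v (Fin.last k))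
      · refine .inr ⟨y, ?_, hyb⟩
        intro i
        refine Fin.lastCases hk (fun j => hy j) i
      · push_neg at hk
        set fk := dot y (v (Fin.last k)) with hfk
        have hfkne : fk ≠ 0 := ne_of_lt hk
        set w : Fin k → E → ℚ := fun i => v i.castSucc - (dot y (v i.castSucc) / fk) • v (Fin.last k) with hw
        set b' : E → ℚ := b - (dot y b / fk) • v (Fin.last k) with hb'
        rcases ih w b' with ⟨c, hc, hsum⟩ | ⟨g, hg, hgb⟩
        · set lam : ℚ := (dot y b - ∑ i, c i * dot y (v i.castSucc)) / fk with hlam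
          have hlampos : 0 ≤ lam := by
            apply le_of_lt
            apply div_pos_of_neg_of_neg _ hk
            have : 0 ≤ ∑ i, c i * dot y (v i.castSucc) := by
              apply Finset.sum_nonneg
              intro i _
              exact mul_nonneg (hc i) (hy i)
            linarith
          refine .inl ⟨Fin.snoc c lam, ?_, ?_⟩
          · intro i; refine Fin.lastCases ?_ ?_ i <;>
              simp [Fin.snoc_last, Fin.snoc_castSucc, hc, hlampos]
          · rw [Fin.sum_univ_castSucc]
            simp only [Fin.snoc_castSucc, Fin.snoc_last]
            -- from hsum : ∑ i, c i • w i = b'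
            funext e
            have he := congrFun hsum e
            simp only [hw, hb', Finset.sum_apply, Pi.smul_apply, Pi.sub_apply, Pi.add_apply,
              smul_eq_mul] at he ⊢
            have he2 : ∑ x : Fin k, c x * v x.castSucc e
                = b e - dot y b / fk * v (Fin.last k) e
                  + (∑ x : Fin k, c x * dot y (v x.castSucc)) * (v (Fin.last k) e / fk) := by
              calc ∑ x : Fin k, c x * v x.castSucc e
                  = ∑ x : Fin k, (c x * (v x.castSucc e - dot y (v x.castSucc) / fk * v (Fin.last k) e)
                      + c x * dot y (v x.castSucc) * (v (Fin.last k) e / fk)) := by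
                    exact Finset.sum_congr rfl fun x _ => by ring
                _ = (∑ x : Fin k, c x * (v x.castSucc e - dot y (v x.castSucc) / fk * v (Fin.last k) e))
                      + ∑ x : Fin k, c x * dot y (v x.castSucc) * (v (Fin.last k) e / fk) := by
                    rw [Finset.sum_add_distrib]
                _ = _ := by rw [he, Finset.sum_mul]
            rw [hlam]
            linear_combination he2
        · refine .inr ⟨g - (dot g (v (Fin.last k)) / fk) • y, ?_, ?_⟩
          · intro i
            refine Fin.lastCases ?_ ?_ i
            · rw [dot_left_sub_smul, div_mul_cancel₀ _ hfkne]; simp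
            · intro j
              have := hg j
              rw [hw] at this
              rw [dot_sub, dot_smul] at this
              rw [dot_left_sub_smul]
              calc (0:ℚ) ≤ dot g (v j.castSucc) - dot y (v j.castSucc) / fk * dot g (v (Fin.last k)) := this
                _ = dot g (v j.castSucc) - dot g (v (Fin.last k)) / fk * dot y (v j.castSucc) := by ring
          · rw [dot_left_sub_smul]
            have := hgb
            rw [hb', dot_sub, dot_smul] at this
            calc dot g b - dot g (v (Fin.last k)) / fk * dot y b
                = dot g b - dot y b / fk * dot g (v (Fin.last k)) := by ring
              _ < 0 := this

theorem farkas' {ι : Type*} [Fintype ι] (v : ι → E → ℚ) (b : E → ℚ) :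
    (∃ c : ι → ℚ, (∀ i, 0 ≤ c i) ∧ ∑ i, c i • v i = b) ∨
    (∃ y : E → ℚ, (∀ i, 0 ≤ dot y (v i)) ∧ dot y b < 0) := by
  let e := Fintype.equivFin ι
  rcases farkas (Fintype.card ι) (fun j => v (e.symm j)) b with ⟨c, hc, hsum⟩ | ⟨y, hy, hyb⟩
  · refine .inl ⟨fun i => c (e i), fun i => hc _, ?_⟩
    rw [← hsum]
    exact Fintype.sum_equiv e _ _ (fun i => by simp)
  · refine .inr ⟨y, fun i => by simpa using hy (e i), hyb⟩

lemma exists_nat_cast {q : ℚ} (hq : 0 ≤ q) {N : ℕ} (hd : q.den ∣ N) :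
    ∃ k : ℕ, (k : ℚ) = q * N := by
  obtain ⟨c, hc⟩ := hd
  have hden : ((q.den : ℚ)) ≠ 0 := by exact_mod_cast q.den_nz
  have h1 : (q.num : ℚ) = q * q.den := (div_eq_iff hden).mp (Rat.num_div_den q)
  have h4 : ((q.num.toNat : ℕ) : ℚ) = (q.num : ℚ) := by
    exact_mod_cast Int.toNat_of_nonneg (Rat.num_nonneg.mpr hq)
  refine ⟨q.num.toNat * c, ?_⟩
  push_cast
  rw [h4, h1, hc]
  push_cast
  ring

end Stmt13

/-- In finite games, absence of balanced sequences implies a strategically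
separable representation. -/
theorem stmt_13 {n : ℕ} {S0 : Type*} {S : Fin n → Type*}
    [Fintype S0] [Nonempty S0] [∀ i, Fintype (S i)] [∀ i, Nonempty (S i)]
    (pref : (∀ i, S i) → S0 → S0 → Prop)
    (htotal : ∀ sp a b, pref sp a b ∨ pref sp b a)
    (htrans : ∀ sp a b c, pref sp a b → pref sp b c → pref sp a c)
    (hnobal : ¬ ∃ (m : ℕ) (r t : Fin m → S0 × (∀ i, S i)),
      (∀ k, (r k).2 = (t k).2) ∧
      (∀ k, pref ((r k).2) ((r k).1) ((t k).1)) ∧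
      (∃ k, ¬ pref ((r k).2) ((t k).1) ((r k).1)) ∧
      (∀ i : Fin n,
        (Finset.univ.val.map fun k => ((r k).1, (r k).2 i))
          = (Finset.univ.val.map fun k => ((t k).1, (t k).2 i)))) :
    ∃ g : ∀ i, S0 → S i → ℝ, ∀ (s0 s0' : S0) (sp : ∀ i, S i),
      pref sp s0 s0' ↔ ∑ i, g i s0 (sp i) ≥ ∑ i, g i s0' (sp i) := by
  classical
  open Stmt13 in
  -- the coordinate space
  let vec : S0 → (∀ i, S i) → (Σ i : Fin n, S0 × S i) → ℚ :=
    fun s0 sp e => if e.2 = (s0, sp e.1) then 1 else 0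
  let d : S0 → S0 → (∀ i, S i) → (Σ i : Fin n, S0 × S i) → ℚ :=
    fun a b sp => vec a sp - vec b sp
  let ι := {x : S0 × S0 × (∀ i, S i) // pref x.2.2 x.1 x.2.1}
  let w : ι → (Σ i : Fin n, S0 × S i) → ℚ := fun t => d t.1.1 t.1.2.1 t.1.2.2
  let ιs := {x : S0 × S0 × (∀ i, S i) // pref x.2.2 x.1 x.2.1 ∧ ¬ pref x.2.2 x.2.1 x.1}
  -- key separation for each strict triple
  have key : ∀ u : ιs, ∃ y, (∀ t : ι, 0 ≤ dot y (w t)) ∧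
      0 < dot y (w ⟨u.1, u.2.1⟩) := by
    rintro ⟨⟨a, b, sp⟩, hab, hba⟩
    set t0 : ι := ⟨(a, b, sp), hab⟩ with ht0
    rcases farkas' w (-(w t0)) with ⟨c, hc, hsum⟩ | ⟨y, hy, hyb⟩
    · -- build a balanced sequence, contradiction
      exfalso
      apply hnobal
      set c' : ι → ℚ := fun t => c t + if t = t0 then 1 else 0 with hc'def
      have hc' : ∀ t, 0 ≤ c' t := by
        intro t
        have := hc t
        simp only [hc'def]
        split <;> linarith
      have hsum' : ∑ t, c' t • w t = 0 := by
        simp only [hc'def, add_smul, Finset.sum_add_distrib, hsum, ite_smul, one_smul, zero_smul,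
          Finset.sum_ite_eq', Finset.mem_univ, if_true]
        rw [Finset.sum_eq_single t0 (fun x _ hx => if_neg hx) (fun h => absurd (Finset.mem_univ _) h),
          if_pos rfl, neg_add_cancel]
      set N : ℕ := ∏ t : ι, (c' t).den with hN
      have hNpos : 0 < N := Finset.prod_pos (fun t _ => (c' t).pos)
      have hdvd : ∀ t : ι, (c' t).den ∣ N :=
        fun t => Finset.dvd_prod_of_mem (fun t => (c' t).den) (Finset.mem_univ t)
      choose nn hnn using fun t : ι => exists_nat_cast (hc' t) (hdvd t)
      have hvec : ∀ e, ∑ t : ι, (nn t : ℚ) * w t e = 0 := by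
        intro e
        have h0 := congrFun hsum' e
        simp only [Finset.sum_apply, Pi.smul_apply, smul_eq_mul, Pi.zero_apply] at h0
        calc ∑ t : ι, (nn t : ℚ) * w t e = ∑ t : ι, (N : ℚ) * (c' t * w t e) := by
              exact Finset.sum_congr rfl fun t _ => by rw [hnn]; ring
          _ = (N : ℚ) * ∑ t : ι, c' t * w t e := by rw [Finset.mul_sum]
          _ = 0 := by rw [h0, mul_zero]
      have hn0 : 0 < nn t0 := by
        have hq : (0 : ℚ) < nn t0 := by
          rw [hnn]
          have h1 : (1 : ℚ) ≤ c' t0 := by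
            have heq : c' t0 = c t0 + 1 := by simp [hc'def]
            have := hc t0; linarith
          have h2 : (0 : ℚ) < N := by exact_mod_cast hNpos
          nlinarith
        exact_mod_cast hq
      -- construct the sequence
      set σ := Σ t : ι, Fin (nn t) with hσ
      set m := Fintype.card σ with hm
      set eqv : σ ≃ Fin m := Fintype.equivFin σ with heqv
      refine ⟨m, fun k => ((eqv.symm k).1.1.1, (eqv.symm k).1.1.2.2),
        fun k => ((eqv.symm k).1.1.2.1, (eqv.symm k).1.1.2.2), fun k => rfl,
        fun k => (eqv.symm k).1.2, ⟨eqv ⟨t0, ⟨0, hn0⟩⟩, ?_⟩, ?_⟩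
      · simp only [Equiv.symm_apply_apply]
        exact hba
      · intro i
        have huniv : (Finset.univ : Finset (Fin m)) =
            (Finset.univ : Finset σ).map eqv.toEmbedding := (Finset.map_univ_equiv eqv).symm
        rw [huniv]
        simp only [Finset.map_val, Multiset.map_map, Function.comp_def, Equiv.coe_toEmbedding,
          Equiv.symm_apply_apply]
        ext z
        rw [Multiset.count_map, Multiset.count_map]
        show (Finset.filter _ Finset.univ).card = (Finset.filter _ Finset.univ).card
        rw [Finset.card_filter, Finset.card_filter]
        rw [← Finset.univ_sigma_univ, Finset.sum_sigma, Finset.sum_sigma]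
        have hconst : ∀ (f : ι → S0 × S i) (t : ι),
            (∑ _j : Fin (nn t), if z = f t then 1 else 0) = nn t * (if z = f t then 1 else 0) := by
          intro f t
          rw [Finset.sum_const, Finset.card_univ, Fintype.card_fin, smul_eq_mul]
        rw [Finset.sum_congr rfl (fun t _ => hconst (fun t => (t.1.1, t.1.2.2 i)) t),
          Finset.sum_congr rfl (fun t _ => hconst (fun t => (t.1.2.1, t.1.2.2 i)) t)]
        -- now a ℕ identity; derive from hvec at ⟨i, z⟩
        have hq := hvec ⟨i, z⟩
        simp only [w, d, vec, Pi.sub_apply] at hq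
        have hq' : ∑ t : ι, (nn t : ℚ) * (if z = (t.1.1, t.1.2.2 i) then 1 else 0)
            = ∑ t : ι, (nn t : ℚ) * (if z = (t.1.2.1, t.1.2.2 i) then 1 else 0) := by
          simp only [mul_sub] at hq
          rw [Finset.sum_sub_distrib] at hq
          linarith
        exact_mod_cast hq'
    · rw [dot_neg] at hyb
      exact ⟨y, hy, by linarith⟩
  choose Y hY1 hY2 using key
  set F : (Σ i : Fin n, S0 × S i) → ℚ := ∑ u : ιs, Y u with hF
  have hFw : ∀ t : ι, 0 ≤ dot F (w t) := by
    intro t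
    rw [hF, dot_sum]
    exact Finset.sum_nonneg fun u _ => hY1 u t
  have hFs : ∀ u : ιs, 0 < dot F (w ⟨u.1, u.2.1⟩) := by
    intro u
    rw [hF, dot_sum]
    exact Finset.sum_pos' (fun u' _ => hY1 u' _) ⟨u, Finset.mem_univ u, hY2 u⟩
  have hdot : ∀ (s0 : S0) (sp : ∀ i, S i),
      dot F (vec s0 sp) = ∑ i, F ⟨i, (s0, sp i)⟩ := by
    intro s0 sp
    rw [dot]
    rw [← Finset.univ_sigma_univ, Finset.sum_sigma]
    refine Finset.sum_congr rfl fun i _ => ?_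
    simp only [vec, mul_ite, mul_one, mul_zero]
    exact (Finset.sum_ite_eq' Finset.univ (s0, sp i) (fun p => F ⟨i, p⟩)).trans
      (if_pos (Finset.mem_univ _))
  have hsub : ∀ (a b : S0) (sp : ∀ i, S i),
      dot F (d a b sp) = (∑ i, F ⟨i, (a, sp i)⟩) - ∑ i, F ⟨i, (b, sp i)⟩ := by
    intro a b sp
    rw [show d a b sp = vec a sp - vec b sp from rfl, dot_sub, hdot, hdot]
  refine ⟨fun i s0 x => ((F ⟨i, (s0, x)⟩ : ℚ) : ℝ), ?_⟩
  intro a b sp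
  have hcast : ∀ s0 : S0, ∑ i, ((F ⟨i, (s0, sp i)⟩ : ℚ) : ℝ)
      = ((∑ i, F ⟨i, (s0, sp i)⟩ : ℚ) : ℝ) := by
    intro s0; push_cast; ring
  constructor
  · intro h
    have h0 : 0 ≤ dot F (d a b sp) := hFw ⟨(a, b, sp), h⟩
    rw [hsub] at h0
    rw [ge_iff_le, hcast, hcast, Rat.cast_le]
    linarith
  · intro h
    by_contra hnab
    have hba : pref sp b a := (htotal sp a b).resolve_left hnab
    have hpos : 0 < dot F (d b a sp) := hFs ⟨(b, a, sp), hba, hnab⟩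
    rw [hsub] at hpos
    rw [ge_iff_le, hcast, hcast, Rat.cast_le] at h
    linarith
end

section
/- Integral solutions of bounded size for homogeneous linear systems: let A ∈ ℤ^{a×d}, B ∈ ℤ^{b×d}, C ∈ ℤ^{c×d}, and suppose there exists x ∈ ℝ^d with Ax ≫ 0, Bx ≥ 0, Cx = 0. Then there exists an integer vector z ∈ ℤ^d satisfying Az ≫ 0, Bz ≥ 0, Cz = 0, and |z_i| ≤ a·Λ for every coordinate i, where Λ = Λ_{d−1}(M) is the maximum absolute value of the determinant of any ℓ×ℓ submatrix of the stacked matrix M = (A; B; C) over 0 ≤ ℓ ≤ d−1 (with the 0×0 determinant equal to 1). -/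
open Matrix

lemma det_unit_rows {ι : Type*} [Fintype ι] [DecidableEq ι]
    (F : Matrix ι ι ℤ) (U : Finset ι) (un : ι → ι)
    (hU : ∀ i ∈ U, ∀ c, F i c = if c = un i then 1 else 0)
    (hinj : Set.InjOn un U) :
    ∃ (τ σ : Fin (Fintype.card ι - U.card) → ι),
      Function.Injective τ ∧ Function.Injective σ ∧ (∀ p, τ p ∉ U) ∧
      |F.det| = |(F.submatrix τ σ).det| := by
  classical
  set u := U.card with hu
  set l := Fintype.card ι - u with hl
  have hUc : Uᶜ.card = l := by rw [Finset.card_compl]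
  set Im := U.image un with hIm
  have hImcard : Im.card = u := Finset.card_image_of_injOn hinj
  have hImc : Imᶜ.card = l := by rw [Finset.card_compl, hImcard]
  let e1 : Fin u ≃ {x // x ∈ U} := U.equivFin.symm
  let e2 : Fin l ≃ {x // ¬ x ∈ U} :=
    ((finCongr hUc.symm).trans Uᶜ.equivFin.symm).trans
      (Equiv.subtypeEquivRight (fun x => Finset.mem_compl))
  let rowE : Fin u ⊕ Fin l ≃ ι := (Equiv.sumCongr e1 e2).trans (Equiv.sumCompl (· ∈ U))
  let f1 : Fin u ≃ {x // x ∈ Im} := (Finset.equivFinOfCardEq hImcard).symm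
  let f2 : Fin l ≃ {x // ¬ x ∈ Im} :=
    ((finCongr hImc.symm).trans Imᶜ.equivFin.symm).trans
      (Equiv.subtypeEquivRight (fun x => Finset.mem_compl))
  let colE : Fin u ⊕ Fin l ≃ ι := (Equiv.sumCongr f1 f2).trans (Equiv.sumCompl (· ∈ Im))
  have hrowl : ∀ q : Fin u, rowE (Sum.inl q) = (e1 q : ι) := fun q => by
    simp [rowE]
  have hrowr : ∀ p : Fin l, rowE (Sum.inr p) = (e2 p : ι) := fun p => by
    simp [rowE]
  have hcoll : ∀ q : Fin u, colE (Sum.inl q) = (f1 q : ι) := fun q => by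
    simp [colE]
  have hcolr : ∀ p : Fin l, colE (Sum.inr p) = (f2 p : ι) := fun p => by
    simp [colE]
  have hrow_mem : ∀ q : Fin u, (rowE (Sum.inl q)) ∈ U := fun q => (hrowl q) ▸ (e1 q).2
  have hrow_notmem : ∀ p : Fin l, (rowE (Sum.inr p)) ∉ U := fun p => (hrowr p) ▸ (e2 p).2
  have hcol_mem : ∀ q, (colE (Sum.inl q)) ∈ Im := fun q => (hcoll q) ▸ (f1 q).2
  have hcol_notmem : ∀ p, (colE (Sum.inr p)) ∉ Im := fun p => (hcolr p) ▸ (f2 p).2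
  let π : Fin u → Fin u := fun q =>
    f1.symm ⟨un (rowE (Sum.inl q)), Finset.mem_image_of_mem un (hrow_mem q)⟩
  have hπ : ∀ q, (f1 (π q) : ι) = un (rowE (Sum.inl q)) := fun q => by
    simp [π]
  have hπinj : Function.Injective π := by
    intro q q' h
    have h2 : un (rowE (Sum.inl q)) = un (rowE (Sum.inl q')) := by
      rw [← hπ q, ← hπ q', h]
    have h3 := hinj (hrow_mem q) (hrow_mem q') h2
    exact Sum.inl_injective (rowE.injective h3)
  have hπbij : Function.Bijective π := Finite.injective_iff_bijective.mp hπinj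
  let πE : Equiv.Perm (Fin u) := Equiv.ofBijective π hπbij
  have hblock : F.submatrix rowE colE =
      Matrix.fromBlocks (F.submatrix (rowE ∘ Sum.inl) (colE ∘ Sum.inl)) 0
        (F.submatrix (rowE ∘ Sum.inr) (colE ∘ Sum.inl))
        (F.submatrix (rowE ∘ Sum.inr) (colE ∘ Sum.inr)) := by
    ext i j
    cases i with
    | inl q =>
      cases j with
      | inl q' => rfl
      | inr p' =>
        have h0 := hU _ (hrow_mem q) (colE (Sum.inr p'))
        simp only [Matrix.submatrix_apply, Matrix.fromBlocks_apply₁₂, Matrix.zero_apply]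
        rw [h0, if_neg]
        intro hc
        exact hcol_notmem p' (hc ▸ Finset.mem_image_of_mem un (hrow_mem q))
    | inr p => cases j <;> rfl
  have hW : F.submatrix (rowE ∘ Sum.inl) (colE ∘ Sum.inl) = πE.permMatrix ℤ := by
    ext q q'
    have h0 := hU _ (hrow_mem q) (colE (Sum.inl q'))
    have hiff : colE (Sum.inl q') = un (rowE (Sum.inl q)) ↔ q' = π q := by
      rw [hcoll q', ← hπ q]
      constructor
      · intro h; exact f1.injective (Subtype.ext h)
      · intro h; rw [h]
    have hπEq : πE q = π q := rfl
    have hperm : πE.permMatrix ℤ q q' = if q' = π q then 1 else 0 := by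
      have h1 : πE.permMatrix ℤ q q' = if πE q = q' then 1 else 0 := by
        simp [Equiv.Perm.permMatrix, PEquiv.toMatrix, Equiv.toPEquiv, Option.mem_def]
      rw [h1, hπEq]
      exact if_congr eq_comm rfl rfl
    simp only [Matrix.submatrix_apply, Function.comp_apply]
    rw [h0, hperm]
    exact if_congr hiff rfl rfl
  have habs : |F.det| = |(F.submatrix (rowE ∘ Sum.inr) (colE ∘ Sum.inr)).det| := by
    have h1 : |(F.submatrix rowE colE).det| = |F.det| := abs_det_submatrix_equiv_equiv rowE colE F
    rw [← h1, hblock, Matrix.det_fromBlocks_zero₁₂, hW, abs_mul, Matrix.det_permutation]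
    rcases Int.units_eq_one_or πE.sign with h | h <;> simp [h]
  exact ⟨rowE ∘ Sum.inr, colE ∘ Sum.inr,
    rowE.injective.comp Sum.inr_injective, colE.injective.comp Sum.inr_injective,
    hrow_notmem, habs⟩


set_option maxHeartbeats 1600000 in
/-- Integral solutions of bounded size for homogeneous linear systems. -/
theorem stmt_15 {a b c d : ℕ}
    (A : Matrix (Fin a) (Fin d) ℤ) (B : Matrix (Fin b) (Fin d) ℤ)
    (C : Matrix (Fin c) (Fin d) ℤ)
    (M : Matrix (Fin a ⊕ (Fin b ⊕ Fin c)) (Fin d) ℤ)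
    (hM : M = Matrix.fromRows A (Matrix.fromRows B C))
    (Λ : ℤ)
    (hΛ : ∀ (ℓ : ℕ), ℓ ≤ d - 1 →
      ∀ (ρ : Fin ℓ → (Fin a ⊕ (Fin b ⊕ Fin c))) (σ : Fin ℓ → Fin d),
        Function.Injective ρ → Function.Injective σ →
          |(M.submatrix ρ σ).det| ≤ Λ)
    (x : Fin d → ℝ)
    (hx1 : ∀ i, 0 < ((A.map fun z : ℤ => (z : ℝ)) *ᵥ x) i)
    (hx2 : ∀ i, 0 ≤ ((B.map fun z : ℤ => (z : ℝ)) *ᵥ x) i)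
    (hx3 : (C.map fun z : ℤ => (z : ℝ)) *ᵥ x = 0) :
    ∃ z : Fin d → ℤ,
      (∀ i, 0 < (A *ᵥ z) i) ∧ (∀ i, 0 ≤ (B *ᵥ z) i) ∧ C *ᵥ z = 0 ∧
      ∀ i, |z i| ≤ (a : ℤ) * Λ := by
  classical
  -- trivial case
  rcases Nat.eq_zero_or_pos a with ha | ha
  · subst ha
    refine ⟨0, fun i => i.elim0, ?_, ?_, ?_⟩
    · intro i; simp [Matrix.mulVec_zero]
    · simp [Matrix.mulVec_zero]
    · intro i; simp
  -- Λ ≥ 1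
  have hΛ1 : (1 : ℤ) ≤ Λ := by
    have := hΛ 0 (Nat.zero_le _) (fun p => p.elim0) (fun p => p.elim0)
      (fun p => p.elim0) (fun p => p.elim0)
    simpa [Matrix.det_fin_zero] using this
  have hΛ0 : (0 : ℤ) ≤ Λ := le_trans zero_le_one hΛ1
  -- notation
  set v : (Fin a ⊕ (Fin b ⊕ Fin c)) → Fin d → ℝ := fun r k => (M r k : ℝ) with hv
  set w : (Fin a ⊕ (Fin b ⊕ Fin c)) → ℝ := Sum.elim (fun _ => (1:ℝ)) (fun _ => 0) with hw
  have hvA : ∀ (i : Fin a) (k : Fin d), v (Sum.inl i) k = (A i k : ℝ) := by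
    intro i k; simp [hv, hM, Matrix.fromRows_apply_inl, Matrix.fromRows_apply_inr]
  have hvB : ∀ (i : Fin b) (k : Fin d), v (Sum.inr (Sum.inl i)) k = (B i k : ℝ) := by
    intro i k; simp [hv, hM, Matrix.fromRows_apply_inl, Matrix.fromRows_apply_inr]
  have hvC : ∀ (i : Fin c) (k : Fin d), v (Sum.inr (Sum.inr i)) k = (C i k : ℝ) := by
    intro i k; simp [hv, hM, Matrix.fromRows_apply_inl, Matrix.fromRows_apply_inr]
  set P : (Fin d → ℝ) → Prop :=
    fun t => (∀ r, w r ≤ v r ⬝ᵥ t) ∧ (∀ k : Fin c, v (Sum.inr (Sum.inr k)) ⬝ᵥ t = 0) with hP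
  -- P is nonempty
  have hAx : ∀ i, v (Sum.inl i) ⬝ᵥ x = ((A.map fun z : ℤ => (z:ℝ)) *ᵥ x) i := by
    intro i
    simp [Matrix.mulVec, dotProduct, hvA]
  have hBx : ∀ i, v (Sum.inr (Sum.inl i)) ⬝ᵥ x = ((B.map fun z : ℤ => (z:ℝ)) *ᵥ x) i := by
    intro i
    simp [Matrix.mulVec, dotProduct, hvB]
  have hCx : ∀ i, v (Sum.inr (Sum.inr i)) ⬝ᵥ x = 0 := by
    intro i
    have h0 : ((C.map fun z : ℤ => (z:ℝ)) *ᵥ x) i = 0 := by rw [hx3]; rfl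
    rw [← h0]
    simp [Matrix.mulVec, dotProduct, hvC]
  have hPne : ∃ t, P t := by
    have hane : (Finset.univ : Finset (Fin a)).Nonempty := by
      have : Nonempty (Fin a) := ⟨⟨0, ha⟩⟩
      exact Finset.univ_nonempty
    set μ := Finset.univ.inf' hane (fun i => v (Sum.inl i) ⬝ᵥ x) with hμ
    have hμpos : 0 < μ := by
      rw [hμ, Finset.lt_inf'_iff]
      intro i _
      rw [hAx i]; exact hx1 i
    have hds : ∀ (u : Fin d → ℝ), u ⬝ᵥ (μ⁻¹ • x) = μ⁻¹ * (u ⬝ᵥ x) := by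
      intro u
      simp only [dotProduct, Finset.mul_sum, Pi.smul_apply, smul_eq_mul]
      exact Finset.sum_congr rfl (fun k _ => by ring)
    refine ⟨μ⁻¹ • x, ?_, ?_⟩
    · intro r
      rcases r with i | r
      · rw [hds]
        have h1 : μ ≤ v (Sum.inl i) ⬝ᵥ x := Finset.inf'_le _ (Finset.mem_univ i)
        have h2 : (1:ℝ) = μ⁻¹ * μ := (inv_mul_cancel₀ hμpos.ne').symm
        simp only [hw, Sum.elim_inl]
        rw [h2]
        exact mul_le_mul_of_nonneg_left h1 (inv_nonneg.2 hμpos.le)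
      · rcases r with j | k
        · rw [hds]
          simp only [hw, Sum.elim_inr]
          exact mul_nonneg (inv_nonneg.2 hμpos.le) (by rw [hBx j]; exact hx2 j)
        · rw [hds, hCx k]
          simp [hw]
    · intro k
      rw [hds, hCx k]; ring
  obtain ⟨x0, hx0⟩ := hPne
  set T : (Fin d → ℝ) → Finset (Fin a ⊕ (Fin b ⊕ Fin c)) :=
    fun t => Finset.univ.filter (fun r => v r ⬝ᵥ t = w r) with hT
  have hTmem : ∀ t r, r ∈ T t ↔ v r ⬝ᵥ t = w r := by
    intro t r; simp [hT]
  set rk : (Fin d → ℝ) → ℕ :=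
    fun t => Module.finrank ℝ (Submodule.span ℝ (v '' (T t : Set _))) with hrk
  set S : Set ℕ := {n | ∃ t, P t ∧ rk t = n} with hS
  have hSne : S.Nonempty := ⟨rk x0, x0, hx0, rfl⟩
  have hSbd : BddAbove S := by
    refine ⟨d, fun n hn => ?_⟩
    obtain ⟨t, _, hrkt⟩ := hn
    rw [← hrkt, hrk]
    have h1 : Module.finrank ℝ (Submodule.span ℝ (v '' (T t : Set _))) ≤
        Module.finrank ℝ (Fin d → ℝ) := Submodule.finrank_le _
    simpa [Module.finrank_fintype_fun_eq_card] using h1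
  obtain ⟨xs, hxsP, hxsrk⟩ : ∃ t, P t ∧ rk t = sSup S := Nat.sSup_mem hSne hSbd
  have hCtight : ∀ k : Fin c, Sum.inr (Sum.inr k) ∈ T xs := by
    intro k
    rw [hTmem, hxsP.2 k]
    simp [hw]
  have hface : ∀ y, (∀ r ∈ T xs, v r ⬝ᵥ y = w r) → P y := by
    intro y hy
    by_contra hPy
    have hyC : ∀ k, v (Sum.inr (Sum.inr k)) ⬝ᵥ y = 0 := by
      intro k; rw [hy _ (hCtight k)]; simp [hw]
    have hex : ∃ s, v s ⬝ᵥ y < w s := by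
      by_contra h
      push_neg at h
      exact hPy ⟨fun r => h r, hyC⟩
    obtain ⟨s, hs⟩ := hex
    set δ : _ → ℝ := fun r => v r ⬝ᵥ y - v r ⬝ᵥ xs with hδ
    have hTδ : ∀ r ∈ T xs, δ r = 0 := by
      intro r hr
      have h1 : v r ⬝ᵥ xs = w r := (hTmem xs r).mp hr
      simp [hδ, h1, hy r hr]
    set N := Finset.univ.filter (fun r => δ r < 0) with hN
    have hsN : s ∈ N := by
      have h2 : δ s < 0 := by
        have := hxsP.1 s
        simp only [hδ]; linarith
      simp [hN, h2]
    have hNne : N.Nonempty := ⟨s, hsN⟩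
    have hNδ : ∀ r ∈ N, δ r < 0 := fun r hr => (Finset.mem_filter.mp hr).2
    set tf : _ → ℝ := fun r => (v r ⬝ᵥ xs - w r) / (-δ r) with htf
    set tm := N.inf' hNne tf with htm
    have htm0 : 0 ≤ tm := by
      rw [htm, Finset.le_inf'_iff]
      intro r hr
      exact div_nonneg (by linarith [hxsP.1 r]) (by linarith [hNδ r hr])
    obtain ⟨rs, hrsN, hrs⟩ := Finset.exists_mem_eq_inf' hNne tf
    set x' := xs + tm • (y - xs) with hx'
    have hdotx' : ∀ r, v r ⬝ᵥ x' = v r ⬝ᵥ xs + tm * δ r := by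
      intro r
      simp only [hx', hδ, dotProduct_add, dotProduct_smul, dotProduct_sub, smul_eq_mul]
      try ring
    have hPx' : P x' := by
      constructor
      · intro r
        rw [hdotx' r]
        by_cases hrN : r ∈ N
        · have h1 : tm ≤ tf r := Finset.inf'_le _ hrN
          have h2 : δ r < 0 := hNδ r hrN
          have hδne : δ r ≠ 0 := ne_of_lt h2
          have h4 : tf r * δ r = -(v r ⬝ᵥ xs - w r) := by
            simp only [htf]
            rw [div_mul_eq_mul_div, mul_div_assoc, div_neg, div_self hδne]
            ring
          nlinarith [hxsP.1 r]
        · have h2 : ¬ (δ r < 0) := by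
            intro hc
            exact hrN (Finset.mem_filter.mpr ⟨Finset.mem_univ r, hc⟩)
          push_neg at h2
          nlinarith [hxsP.1 r]
      · intro k
        rw [hdotx' _, hTδ _ (hCtight k), hxsP.2 k]; ring
    have hTsub : T xs ⊆ T x' := by
      intro r hr
      rw [hTmem]
      rw [hdotx' r, hTδ r hr, (hTmem xs r).mp hr]; ring
    have hrsT : rs ∈ T x' := by
      have hδrs : δ rs < 0 := hNδ rs hrsN
      rw [hTmem]
      have hδne : δ rs ≠ 0 := ne_of_lt hδrs
      have hrs' : tm = tf rs := by rw [htm, hrs]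
      rw [hdotx' rs, hrs']
      simp only [htf]
      rw [div_mul_eq_mul_div, mul_div_assoc, div_neg, div_self hδne]
      ring
    have hnotspan : v rs ∉ Submodule.span ℝ (v '' (T xs : Set _)) := by
      intro hmem
      set f : (Fin d → ℝ) →ₗ[ℝ] ℝ :=
        { toFun := fun u => u ⬝ᵥ (y - xs)
          map_add' := fun u1 u2 => by
            simp only [add_dotProduct, dotProduct_sub]
            ring
          map_smul' := fun m u => by
            simp only [smul_dotProduct, dotProduct_sub, smul_eq_mul, RingHom.id_apply]
            ring } with hf
      have hker : Submodule.span ℝ (v '' (T xs : Set _)) ≤ LinearMap.ker f := by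
        rw [Submodule.span_le]
        rintro _ ⟨r, hr, rfl⟩
        simp only [SetLike.mem_coe, LinearMap.mem_ker, hf, LinearMap.coe_mk, AddHom.coe_mk]
        have h6 := hTδ r (Finset.mem_coe.mp hr)
        simpa [hδ, dotProduct_sub] using h6
      have h7 := hker hmem
      simp only [LinearMap.mem_ker, hf, LinearMap.coe_mk, AddHom.coe_mk] at h7
      have h5 : δ rs = 0 := by simpa [hδ, dotProduct_sub] using h7
      have := hNδ rs hrsN; linarith
    have hlt : Submodule.span ℝ (v '' (T xs : Set _)) <
        Submodule.span ℝ (v '' (T x' : Set _)) := by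
      apply lt_of_le_of_ne
      · exact Submodule.span_mono (Set.image_mono hTsub)
      · intro heq
        apply hnotspan
        rw [heq]
        exact Submodule.subset_span ⟨rs, Finset.mem_coe.mpr hrsT, rfl⟩
    have hrklt : rk xs < rk x' := Submodule.finrank_lt_finrank_of_lt hlt
    have hle : rk x' ≤ sSup S := le_csSup hSbd ⟨x', hPx', rfl⟩
    omega
  -- select a linearly independent spanning subset of the tight rows
  set Tset : Set (Fin d → ℝ) := v '' (T xs : Set _) with hTset
  obtain ⟨Bs, hBsub, hBspan, hBli⟩ := exists_linearIndependent ℝ Tset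
  have hBfin : Bs.Finite := Set.Finite.subset (Set.Finite.image v (T xs).finite_toSet) hBsub
  haveI := hBfin.fintype
  set BF := hBfin.toFinset with hBF
  set k := BF.card with hk
  let eB : Fin k ≃ BF := BF.equivFin.symm
  have heBmem : ∀ j, (eB j : Fin d → ℝ) ∈ Bs := fun j => hBfin.mem_toFinset.mp (eB j).2
  have hpre : ∀ j : Fin k, ∃ r, r ∈ T xs ∧ v r = (eB j : Fin d → ℝ) := by
    intro j
    obtain ⟨r, hr, hvr⟩ := hBsub (heBmem j)
    exact ⟨r, Finset.mem_coe.mp hr, hvr⟩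
  choose ρ hρT hρv using hpre
  have hρinj : Function.Injective ρ := by
    intro j1 j2 h
    have hvv : (eB j1 : Fin d → ℝ) = eB j2 := by rw [← hρv j1, ← hρv j2, h]
    exact eB.injective (Subtype.ext hvv)
  -- extend to a basis by unit vectors
  set unitSet : Set (Fin d → ℝ) :=
    Set.range (fun j : Fin d => (Pi.single j (1:ℝ) : Fin d → ℝ)) with hunitSet
  have hsub : Bs ⊆ Bs ∪ unitSet := Set.subset_union_left
  have hBli' : LinearIndepOn ℝ id Bs := hBli
  set Es := hBli'.extend hsub with hEsdef
  have hBsubEs : Bs ⊆ Es := hBli'.subset_extend hsub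
  have hEsubUnion : Es ⊆ Bs ∪ unitSet := hBli'.extend_subset hsub
  have hEli : LinearIndependent ℝ ((↑) : Es → (Fin d → ℝ)) := hBli'.linearIndepOn_extend hsub
  have hEspan : Submodule.span ℝ Es = ⊤ := by
    have h2 : Submodule.span ℝ unitSet = ⊤ := by
      have hb := (Pi.basisFun ℝ (Fin d)).span_eq
      have h3 : Set.range ⇑(Pi.basisFun ℝ (Fin d)) = unitSet := by
        ext u
        simp [hunitSet]
      rwa [h3] at hb
    have h1 : unitSet ⊆ ↑(Submodule.span ℝ Es) := fun u hu =>
      hBli'.subset_span_extend hsub (Set.mem_union_right _ hu)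
    have h4 : Submodule.span ℝ unitSet ≤ Submodule.span ℝ Es := Submodule.span_le.mpr h1
    rw [h2] at h4
    exact top_le_iff.mp h4
  have hEfin : Es.Finite :=
    Set.Finite.subset (Set.Finite.union hBfin (Set.finite_range _)) hEsubUnion
  haveI := hEfin.fintype
  set Ds : Set (Fin d → ℝ) := Es \ Bs with hDs
  have hDfin : Ds.Finite := hEfin.subset Set.diff_subset
  haveI := hDfin.fintype
  set DF := hDfin.toFinset with hDF
  set m := DF.card with hm
  let eD : Fin m ≃ DF := DF.equivFin.symm
  have heDmem : ∀ q, (eD q : Fin d → ℝ) ∈ Ds := fun q => hDfin.mem_toFinset.mp (eD q).2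
  have hτpre : ∀ q : Fin m, ∃ j : Fin d, (eD q : Fin d → ℝ) = Pi.single j 1 := by
    intro q
    have h1 : (eD q : Fin d → ℝ) ∈ Es := (heDmem q).1
    have h2 : (eD q : Fin d → ℝ) ∉ Bs := (heDmem q).2
    rcases hEsubUnion h1 with h | h
    · exact absurd h h2
    · obtain ⟨j, hj⟩ := h
      exact ⟨j, hj.symm⟩
  choose τ hτ using hτpre
  have hsingle_inj : Function.Injective (fun j : Fin d => (Pi.single j (1:ℝ) : Fin d → ℝ)) := by
    intro j1 j2 h
    by_contra hne
    have := congrFun h j1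
    simp [Pi.single_apply, Ne.symm hne] at this
  have hτinj : Function.Injective τ := by
    intro q1 q2 h
    have : (eD q1 : Fin d → ℝ) = eD q2 := by rw [hτ q1, hτ q2, h]
    exact eD.injective (Subtype.ext this)
  -- cardinality: k + m = d
  have hkm : k + m = d := by
    have hEF : hEfin.toFinset = BF ∪ DF := by
      ext u
      simp only [Set.Finite.mem_toFinset, Finset.mem_union, hBF, hDF, hDs]
      constructor
      · intro hu
        by_cases hb : u ∈ Bs
        · exact Or.inl hb
        · exact Or.inr ⟨hu, hb⟩
      · rintro (hb | hd)
        · exact hBsubEs hb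
        · exact hd.1
    have hdisj : Disjoint BF DF := by
      rw [Finset.disjoint_left]
      intro u hu hu2
      rw [hBF, Set.Finite.mem_toFinset] at hu
      rw [hDF, Set.Finite.mem_toFinset, hDs] at hu2
      exact hu2.2 hu
    have hcard1 : hEfin.toFinset.card = k + m := by
      rw [hEF, Finset.card_union_of_disjoint hdisj]
    -- card Es = d via the basis
    let bE : Module.Basis Es ℝ (Fin d → ℝ) := Module.Basis.mk hEli (by rw [Subtype.range_coe, hEspan])
    have hfr : Module.finrank ℝ (Fin d → ℝ) = Fintype.card Es :=
      Module.finrank_eq_card_basis bE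
    rw [Module.finrank_fintype_fun_eq_card, Fintype.card_fin] at hfr
    rw [← hcard1, Set.Finite.card_toFinset, ← hfr]
  -- the square integer matrix
  set Drow : (Fin k ⊕ Fin m) → Fin d → ℤ :=
    Sum.elim (fun j => M (ρ j)) (fun q c => if c = τ q then 1 else 0) with hDrow
  set e : (Fin k ⊕ Fin m) ≃ Fin d := finSumFinEquiv.trans (finCongr hkm) with he
  set D : Matrix (Fin k ⊕ Fin m) (Fin k ⊕ Fin m) ℤ :=
    Matrix.of (fun p q => Drow p (e q)) with hD
  set Dc : Matrix (Fin k ⊕ Fin m) (Fin k ⊕ Fin m) ℝ := D.map (fun z : ℤ => (z:ℝ)) with hDc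
  -- rows of the real matrix are independent
  have hrowR : ∀ p c, ((Drow p c : ℤ) : ℝ) =
      Sum.elim (fun j => v (ρ j)) (fun q => (Pi.single (τ q) 1 : Fin d → ℝ)) p c := by
    intro p c
    cases p with
    | inl j => simp [hDrow, hv]
    | inr q =>
      simp only [hDrow, Sum.elim_inr, Pi.single_apply]
      split <;> simp
  have hDcunit : IsUnit Dc := by
    set rr : (Fin k ⊕ Fin m) → (Fin d → ℝ) :=
      Sum.elim (fun j => v (ρ j)) (fun q => (Pi.single (τ q) 1 : Fin d → ℝ)) with hrr
    have hfsub : ∀ p : Fin k ⊕ Fin m, rr p ∈ Es := by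
      intro p
      cases p with
      | inl j =>
        have : rr (Sum.inl j) = (eB j : Fin d → ℝ) := by rw [hrr]; simp [← hρv j]
        rw [this]; exact hBsubEs (heBmem j)
      | inr q =>
        have : rr (Sum.inr q) = (eD q : Fin d → ℝ) := by rw [hrr]; simp [← hτ q]
        rw [this]; exact (heDmem q).1
    have hrrinj : Function.Injective rr := by
      intro p1 p2 h
      cases p1 with
      | inl j1 =>
        cases p2 with
        | inl j2 =>
          congr
          apply eB.injective
          apply Subtype.ext
          rw [← hρv j1, ← hρv j2]
          simpa [hrr] using h
        | inr q2 =>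
          exfalso
          have h1 : rr (Sum.inl j1) ∈ Bs := by
            have he1 : rr (Sum.inl j1) = (eB j1 : Fin d → ℝ) := by simp [hrr, hρv j1]
            rw [he1]; exact heBmem j1
          have h2 : rr (Sum.inr q2) ∉ Bs := by
            have := (heDmem q2).2
            simpa [hrr, ← hτ q2] using this
          rw [h] at h1
          exact h2 h1
      | inr q1 =>
        cases p2 with
        | inl j2 =>
          exfalso
          have h1 : rr (Sum.inl j2) ∈ Bs := by
            have he1 : rr (Sum.inl j2) = (eB j2 : Fin d → ℝ) := by simp [hrr, hρv j2]
            rw [he1]; exact heBmem j2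
          have h2 : rr (Sum.inr q1) ∉ Bs := by
            have := (heDmem q1).2
            simpa [hrr, ← hτ q1] using this
          rw [← h] at h1
          exact h2 h1
        | inr q2 =>
          congr
          apply eD.injective
          apply Subtype.ext
          rw [hτ q1, hτ q2]
          simpa [hrr] using h
    have hrrli : LinearIndependent ℝ rr := by
      have : rr = ((↑) : Es → (Fin d → ℝ)) ∘ (fun p => (⟨rr p, hfsub p⟩ : Es)) := by
        funext p; rfl
      rw [this]
      exact hEli.comp _ (fun p1 p2 h => hrrinj (by simpa using congrArg Subtype.val h))
    have hDcrows : (fun p => Dc p) = (LinearEquiv.funCongrLeft ℝ ℝ e).toLinearMap ∘ rr := by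
      funext p
      funext q
      simp only [hDc, Matrix.map_apply, Function.comp_apply, LinearEquiv.coe_coe,
        LinearEquiv.funCongrLeft_apply, LinearMap.funLeft_apply]
      exact hrowR p (e q)
    have hli2 : LinearIndependent ℝ (fun p => Dc p) := by
      rw [hDcrows]
      exact hrrli.map' _ (LinearEquiv.funCongrLeft ℝ ℝ e).ker
    exact Matrix.linearIndependent_rows_iff_isUnit.mp hli2
  set δ : ℤ := D.det with hδdet
  have hcastdet : (δ : ℝ) = Dc.det := by
    have h := RingHom.map_det (Int.castRingHom ℝ) D
    simpa [RingHom.mapMatrix_apply, hDc] using h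
  have hδne : δ ≠ 0 := by
    intro h0
    have : Dc.det ≠ 0 := by
      have := (Matrix.isUnit_iff_isUnit_det Dc).mp hDcunit
      exact this.ne_zero
    rw [← hcastdet, h0] at this
    simp at this
  -- the integral candidate
  set vI : (Fin k ⊕ Fin m) → ℤ :=
    Sum.elim (fun j => Sum.elim (fun _ : Fin a => (1:ℤ)) (fun _ => (0:ℤ)) (ρ j)) (fun _ => 0)
    with hvI
  set zS : (Fin k ⊕ Fin m) → ℤ := D.adjugate *ᵥ vI with hzS
  set sgn : ℤ := if 0 ≤ δ then 1 else -1 with hsgn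
  have hsgnδ : sgn * δ = |δ| := by
    rw [hsgn]; rcases le_or_gt 0 δ with h | h
    · rw [if_pos h, one_mul, abs_of_nonneg h]
    · rw [if_neg (not_le.mpr h), neg_one_mul, abs_of_neg h]
  set z : Fin d → ℤ := fun i => sgn * zS (e.symm i) with hz
  set vc : (Fin k ⊕ Fin m) → ℝ := fun p => (vI p : ℝ) with hvc
  have hcast_zS : ∀ p, ((zS p : ℤ) : ℝ) = (Dc.adjugate *ᵥ vc) p := by
    intro p
    simp only [hzS, Matrix.mulVec, dotProduct]
    push_cast
    apply Finset.sum_congr rfl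
    intro q _
    congr 1
    have h := RingHom.map_adjugate (Int.castRingHom ℝ) D
    have h2 := congrFun (congrFun h p) q
    simpa [RingHom.mapMatrix_apply, Matrix.map_apply, hDc] using h2
  set Y : (Fin k ⊕ Fin m) → ℝ := fun p => (δ:ℝ)⁻¹ * ((zS p : ℤ) : ℝ) with hY
  set y : Fin d → ℝ := fun i => Y (e.symm i) with hy
  have hδRne : ((δ:ℝ)) ≠ 0 := Int.cast_ne_zero.mpr hδne
  have hDcY : Dc *ᵥ Y = vc := by
    have h1 : Y = (δ:ℝ)⁻¹ • (Dc.adjugate *ᵥ vc) := by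
      funext p
      simp only [hY, Pi.smul_apply, smul_eq_mul, hcast_zS]
    rw [h1, Matrix.mulVec_smul, Matrix.mulVec_mulVec, Matrix.mul_adjugate,
      Matrix.smul_mulVec, Matrix.one_mulVec, ← hcastdet, smul_smul,
      inv_mul_cancel₀ hδRne, one_smul]
  have hdot_reindex : ∀ u : Fin d → ℝ, u ⬝ᵥ y = (fun p => u (e p)) ⬝ᵥ Y := by
    intro u
    rw [dotProduct, dotProduct, ← Equiv.sum_comp e (fun i => u i * y i)]
    apply Finset.sum_congr rfl
    intro p _
    rw [hy]
    simp
  have hrowdot : ∀ j : Fin k, v (ρ j) ⬝ᵥ y = vc (Sum.inl j) := by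
    intro j
    rw [hdot_reindex]
    have h1 : (fun p => v (ρ j) (e p)) = fun p => Dc (Sum.inl j) p := by
      funext p
      simp [hv, hDc, hD, hDrow]
    rw [h1]
    have h2 := congrFun hDcY (Sum.inl j)
    rw [← h2]
    rfl
  have hvcw : ∀ j : Fin k, vc (Sum.inl j) = w (ρ j) := by
    intro j
    rcases hrj : ρ j with i0 | r2
    · simp [hvc, hvI, hw, hrj]
    · rcases r2 with i2 | i3 <;> simp [hvc, hvI, hw, hrj]
  have hytight : ∀ r ∈ T xs, v r ⬝ᵥ y = w r := by
    intro r hr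
    have hmem : v r ∈ Submodule.span ℝ Bs := by
      rw [hBspan]
      exact Submodule.subset_span ⟨r, Finset.mem_coe.mpr hr, rfl⟩
    set f : (Fin d → ℝ) →ₗ[ℝ] ℝ :=
      { toFun := fun u => u ⬝ᵥ y - u ⬝ᵥ xs
        map_add' := fun u1 u2 => by
          simp only [add_dotProduct]
          ring
        map_smul' := fun mm u => by
          simp only [smul_dotProduct, smul_eq_mul, RingHom.id_apply]
          ring } with hf
    have hker : Submodule.span ℝ Bs ≤ LinearMap.ker f := by
      rw [Submodule.span_le]
      intro u hu
      simp only [SetLike.mem_coe, LinearMap.mem_ker, hf, LinearMap.coe_mk, AddHom.coe_mk]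
      have huBF : u ∈ BF := hBfin.mem_toFinset.mpr hu
      set j := eB.symm ⟨u, huBF⟩ with hj
      have hju : (eB j : Fin d → ℝ) = u := by rw [hj]; simp
      have h1 : u ⬝ᵥ y = w (ρ j) := by
        rw [← hju, ← hρv j, hrowdot j, hvcw j]
      have h2 : u ⬝ᵥ xs = w (ρ j) := by
        rw [← hju, ← hρv j]
        exact (hTmem xs (ρ j)).mp (hρT j)
      rw [h1, h2, sub_self]
    have h3 := hker hmem
    simp only [LinearMap.mem_ker, hf, LinearMap.coe_mk, AddHom.coe_mk] at h3
    have h4 : v r ⬝ᵥ xs = w r := (hTmem xs r).mp hr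
    linarith
  have hPy : P y := hface y hytight
  -- casting the integral vector
  have habs_cast : |(δ:ℝ)| * (δ:ℝ)⁻¹ = (sgn : ℝ) := by
    have h1 : ((|δ| : ℤ) : ℝ) = |(δ:ℝ)| := by push_cast; ring
    rw [← h1, ← hsgnδ]
    push_cast
    rw [mul_assoc, mul_inv_cancel₀ hδRne, mul_one]
  have hkey : ∀ r, (((M *ᵥ z) r : ℤ) : ℝ) = |(δ:ℝ)| * (v r ⬝ᵥ y) := by
    intro r
    simp only [Matrix.mulVec, dotProduct]
    push_cast
    rw [Finset.mul_sum]
    apply Finset.sum_congr rfl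
    intro i _
    simp only [hz, hy, hY, hv]
    push_cast
    rw [← habs_cast]
    ring
  have hδabs1 : (1:ℝ) ≤ |(δ:ℝ)| := by
    have h1 : (1:ℤ) ≤ |δ| := Int.one_le_abs hδne
    have h2 : ((1:ℤ):ℝ) ≤ ((|δ|:ℤ):ℝ) := Int.cast_le.mpr h1
    have h3 : ((|δ| : ℤ) : ℝ) = |(δ:ℝ)| := by push_cast; ring
    rw [h3] at h2
    exact_mod_cast h2
  -- the cofactor bound
  have hadj : ∀ (p : Fin k ⊕ Fin m) (j : Fin k), |D.adjugate p (Sum.inl j)| ≤ Λ := by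
    intro p j
    rw [Matrix.adjugate_apply]
    set F := D.updateRow (Sum.inl j) (Pi.single p 1) with hF
    set U : Finset (Fin k ⊕ Fin m) := insert (Sum.inl j) (Finset.univ.image Sum.inr) with hUdef
    set un : (Fin k ⊕ Fin m) → (Fin k ⊕ Fin m) :=
      Sum.elim (fun _ => p) (fun q => e.symm (τ q)) with hundef
    have hUrows : ∀ i2 ∈ U, ∀ q, F i2 q = if q = un i2 then 1 else 0 := by
      intro i2 hi2 q
      rcases Finset.mem_insert.mp hi2 with h | h
      · subst h
        rw [hF, Matrix.updateRow_self]
        simp [Pi.single_apply, hundef]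
      · obtain ⟨q', _, rfl⟩ := Finset.mem_image.mp h
        rw [hF, Matrix.updateRow_ne (by simp : (Sum.inr q' : Fin k ⊕ Fin m) ≠ Sum.inl j)]
        show D (Sum.inr q') q = _
        simp only [hD, Matrix.of_apply, hDrow, Sum.elim_inr, hundef]
        exact if_congr (Equiv.eq_symm_apply e).symm rfl rfl
    by_cases hinj : Set.InjOn un U
    · obtain ⟨τ', σ', hτ'inj, hσ'inj, hτ'U, habs⟩ := det_unit_rows F U un hUrows hinj
      have hcardι : Fintype.card (Fin k ⊕ Fin m) = d := by
        simp [hkm]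
      have hUcard : U.card = m + 1 := by
        rw [hUdef, Finset.card_insert_of_notMem (by simp),
          Finset.card_image_of_injective _ Sum.inr_injective]
        simp
      have hl : Fintype.card (Fin k ⊕ Fin m) - U.card ≤ d - 1 := by
        rw [hcardι, hUcard]
        omega
      have hout : ∀ p', ∃ j' : Fin k, τ' p' = Sum.inl j' ∧ j' ≠ j := by
        intro p'
        rcases h : τ' p' with j' | q'
        · refine ⟨j', rfl, ?_⟩
          intro hc
          apply hτ'U p'
          rw [h, hc, hUdef]
          exact Finset.mem_insert_self _ _
        · exfalso
          apply hτ'U p'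
          rw [h, hUdef]
          exact Finset.mem_insert_of_mem (Finset.mem_image_of_mem _ (Finset.mem_univ q'))
      choose jof hjof hjofne using hout
      have hjofinj : Function.Injective jof := by
        intro p1 p2 h
        apply hτ'inj
        rw [hjof p1, hjof p2, h]
      have hsubm : F.submatrix τ' σ' =
          M.submatrix (fun p' => ρ (jof p')) (fun q' => e (σ' q')) := by
        ext p' q'
        rw [Matrix.submatrix_apply, Matrix.submatrix_apply, hjof p', hF,
          Matrix.updateRow_ne (fun hc => hjofne p' (Sum.inl_injective hc))]
        simp [hD, hDrow]
      rw [habs, hsubm]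
      exact hΛ _ hl _ _ (hρinj.comp hjofinj) (e.injective.comp hσ'inj)
    · rw [Set.InjOn] at hinj
      push_neg at hinj
      obtain ⟨x1, hx1U, x2, hx2U, hux, hne⟩ := hinj
      have hFrow : F x1 = F x2 := by
        funext q
        rw [hUrows x1 (Finset.mem_coe.mp hx1U) q, hUrows x2 (Finset.mem_coe.mp hx2U) q, hux]
      rw [Matrix.det_zero_of_row_eq hne hFrow, abs_zero]
      exact hΛ0
  -- assemble
  refine ⟨z, ?_, ?_, ?_, ?_⟩
  · intro i
    have h1 := hkey (Sum.inl i)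
    have h2 : (1:ℝ) ≤ v (Sum.inl i) ⬝ᵥ y := by
      have := hPy.1 (Sum.inl i)
      simpa [hw] using this
    have h3 : (0:ℝ) < |(δ:ℝ)| * (v (Sum.inl i) ⬝ᵥ y) := by nlinarith
    have h4 : (A *ᵥ z) i = (M *ᵥ z) (Sum.inl i) := by
      rw [hM]
      rfl
    rw [h4]
    have h5 : (0:ℝ) < (((M *ᵥ z) (Sum.inl i) : ℤ) : ℝ) := by rw [h1]; exact h3
    exact_mod_cast h5
  · intro i
    have h1 := hkey (Sum.inr (Sum.inl i))
    have h2 : (0:ℝ) ≤ v (Sum.inr (Sum.inl i)) ⬝ᵥ y := by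
      have := hPy.1 (Sum.inr (Sum.inl i))
      simpa [hw] using this
    have h3 : (0:ℝ) ≤ |(δ:ℝ)| * (v (Sum.inr (Sum.inl i)) ⬝ᵥ y) :=
      mul_nonneg (abs_nonneg _) h2
    have h4 : (B *ᵥ z) i = (M *ᵥ z) (Sum.inr (Sum.inl i)) := by
      rw [hM]
      rfl
    rw [h4]
    have h5 : (0:ℝ) ≤ (((M *ᵥ z) (Sum.inr (Sum.inl i)) : ℤ) : ℝ) := by rw [h1]; exact h3
    exact_mod_cast h5
  · funext i
    have h1 := hkey (Sum.inr (Sum.inr i))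
    have h2 : v (Sum.inr (Sum.inr i)) ⬝ᵥ y = 0 := hPy.2 i
    have h4 : (C *ᵥ z) i = (M *ᵥ z) (Sum.inr (Sum.inr i)) := by
      rw [hM]
      rfl
    have h5 : (((M *ᵥ z) (Sum.inr (Sum.inr i)) : ℤ) : ℝ) = 0 := by
      rw [h1, h2, mul_zero]
    have h6 : (M *ᵥ z) (Sum.inr (Sum.inr i)) = 0 := by exact_mod_cast h5
    rw [Pi.zero_apply, h4, h6]
  · intro i
    have hzi : z i = sgn * zS (e.symm i) := by rw [hz]
    rw [hzi, abs_mul]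
    have hsgnabs : |sgn| = 1 := by
      rw [hsgn]
      rcases le_or_gt 0 δ with h | h
      · rw [if_pos h]; simp
      · rw [if_neg (not_le.mpr h)]; simp
    rw [hsgnabs, one_mul]
    set p := e.symm i with hp
    have hsplit : zS p = ∑ j : Fin k, D.adjugate p (Sum.inl j) * vI (Sum.inl j) := by
      rw [hzS]
      show (fun q => D.adjugate p q) ⬝ᵥ vI = _
      rw [dotProduct, Fintype.sum_sum_type]
      have h0 : ∀ q : Fin m, D.adjugate p (Sum.inr q) * vI (Sum.inr q) = 0 := by
        intro q; simp [hvI]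
      rw [Finset.sum_congr rfl (fun q _ => h0 q)]
      simp
    calc |zS p| ≤ ∑ j : Fin k, |D.adjugate p (Sum.inl j) * vI (Sum.inl j)| := by
          rw [hsplit]
          exact Finset.abs_sum_le_sum_abs _ _
    _ ≤ ∑ j : Fin k, Λ * vI (Sum.inl j) := by
          apply Finset.sum_le_sum
          intro j _
          rcases h : ρ j with i0 | r2
          · have hv1 : vI (Sum.inl j) = 1 := by simp [hvI, h]
            rw [hv1, mul_one, mul_one]
            exact hadj p j
          · have hv0 : vI (Sum.inl j) = 0 := by simp [hvI, h]
            rw [hv0, mul_zero, mul_zero, abs_zero]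
    _ = Λ * ∑ j : Fin k, vI (Sum.inl j) := by rw [Finset.mul_sum]
    _ ≤ Λ * a := by
          apply mul_le_mul_of_nonneg_left ?_ hΛ0
          have hform : ∀ j, vI (Sum.inl j) =
              if ∃ i0 : Fin a, ρ j = Sum.inl i0 then 1 else 0 := by
            intro j
            rcases h : ρ j with i0 | r2
            · simp [hvI, h]
            · simp [hvI, h]
          rw [Finset.sum_congr rfl (fun j _ => hform j), Finset.sum_boole]
          have hcard : (Finset.univ.filter
              (fun j : Fin k => ∃ i0 : Fin a, ρ j = Sum.inl i0)).card ≤ a := by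
            have h1 : (Finset.univ.filter
                (fun j : Fin k => ∃ i0 : Fin a, ρ j = Sum.inl i0)).card ≤
                (Finset.univ : Finset (Fin a)).card := by
              apply Finset.card_le_card_of_injOn
                (f := fun j : Fin k => Sum.elim id (fun _ => (⟨0, ha⟩ : Fin a)) (ρ j))
              · intro j _
                exact Finset.mem_univ _
              · intro j1 hj1 j2 hj2 hj12
                simp only [Finset.coe_filter, Set.mem_setOf_eq, Finset.mem_univ,
                  true_and] at hj1 hj2
                obtain ⟨i1, hi1⟩ := hj1
                obtain ⟨i2, hi2⟩ := hj2
                have hj12' : Sum.elim id (fun _ => (⟨0, ha⟩ : Fin a)) (ρ j1) =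
                    Sum.elim id (fun _ => (⟨0, ha⟩ : Fin a)) (ρ j2) := hj12
                rw [hi1, hi2] at hj12'
                simp only [Sum.elim_inl, id] at hj12'
                apply hρinj
                rw [hi1, hi2, hj12']
            simpa using h1
          exact_mod_cast hcard
    _ = (a:ℤ) * Λ := mul_comm _ _
end

section
/- Suppose ≿ is a total preorder on Δ(S) (Borel probability measures on a separable metric space S = S_0 × ... × S_{n−1}) admitting a continuous Bernoulli index u : S → ℝ (i.e., p ≿ q iff ∫u dp ≥ ∫u dq). If ≿ is indifferent between any two measures p, q whose two-dimensional marginals on coordinate pairs {i, j} all agree for a fixed i and every j ≠ i, then there exist continuous functions u_j : S_i × S_j → ℝ (j ≠ i) such that u(s) = Σ_{j ≠ i} u_j(s_i, s_j) for all s ∈ S. -/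
open MeasureTheory
open scoped ENNReal NNReal

private lemma map_finset_sum17 {α β ι : Type*} [MeasurableSpace α] [MeasurableSpace β]
    {g : α → β} (hg : Measurable g) (E : Finset ι) (μ : ι → Measure α) :
    (∑ j ∈ E, μ j).map g = ∑ j ∈ E, (μ j).map g := by
  classical
  induction E using Finset.induction with
  | empty => simp
  | insert _ _ h ih =>
    rw [Finset.sum_insert h, Finset.sum_insert h, Measure.map_add _ _ hg, ih]

private lemma sum_ite_eq_point17 {ι M : Type*} [DecidableEq ι] [AddCommMonoid M]
    (E : Finset ι) {a : ι} (ha : a ∈ E) (A B : M) :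
    ∑ x ∈ E, (if x = a then A else B) = A + (E.card - 1) • B := by
  rw [← Finset.add_sum_erase _ _ ha, if_pos rfl]
  congr 1
  rw [Finset.sum_congr rfl (fun x hx => if_neg (Finset.ne_of_mem_erase hx)),
      Finset.sum_const, Finset.card_erase_of_mem ha]

private lemma sum_ite_point17 {ι M : Type*} [DecidableEq ι] [AddCommMonoid M]
    (E : Finset ι) {a b : ι} (ha : a ∈ E) (hb : b ∈ E) (A B : M) :
    ∑ x ∈ E, (if x = a then A else B) = ∑ x ∈ E, (if x = b then A else B) := by
  rw [sum_ite_eq_point17 E ha, sum_ite_eq_point17 E hb]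

/-- If a continuous Bernoulli index is indifferent across probability measures with
the same pairwise marginals on coordinates {i, j}, then it is additively separable
across the opponents of i. -/
theorem stmt_17 {n : ℕ} (hn : 2 ≤ n) (S : Fin n → Type*)
    [∀ k, MetricSpace (S k)] [∀ k, TopologicalSpace.SeparableSpace (S k)]
    [∀ k, MeasurableSpace (S k)] [∀ k, BorelSpace (S k)]
    (i : Fin n) (u : (∀ k, S k) → ℝ) (hu : Continuous u)
    (hmarg : ∀ μ ν : Measure (∀ k, S k),
      IsProbabilityMeasure μ → IsProbabilityMeasure ν →
      (∀ j, j ≠ i → μ.map (fun s => (s i, s j)) = ν.map (fun s => (s i, s j))) →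
      ∫ s, u s ∂μ = ∫ s, u s ∂ν) :
    ∃ uj : ∀ j : Fin n, S i → S j → ℝ,
      (∀ j, j ≠ i → Continuous fun p : S i × S j => uj j p.1 p.2) ∧
      (∀ s : ∀ k, S k, u s = ∑ j ∈ Finset.univ.erase i, uj j (s i) (s j)) := by
  classical
  by_cases hne : Nonempty (∀ k, S k)
  swap
  · exact ⟨fun j a b => 0, fun j _ => continuous_const, fun s => absurd ⟨s⟩ hne⟩
  obtain ⟨t⟩ := hne
  haveI : ∀ k, SecondCountableTopology (S k) :=
    fun k => UniformSpace.secondCountable_of_separable (S k)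
  have hnt : Nontrivial (Fin n) := Fin.nontrivial_iff_two_le.mpr hn
  obtain ⟨j0, hj0⟩ := exists_ne i
  set E : Finset (Fin n) := Finset.univ.erase i with hE
  have hj0E : j0 ∈ E := Finset.mem_erase.mpr ⟨hj0, Finset.mem_univ _⟩
  have hcard_pos : 0 < E.card := Finset.card_pos.mpr ⟨j0, hj0E⟩
  have hcardR : (0 : ℝ) < (E.card : ℝ) := by exact_mod_cast hcard_pos
  set base : S i → ∀ k, S k := fun a => Function.update t i a with hbase
  have hbasei : ∀ a, base a i = a := fun a => Function.update_self i a t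
  have humeas : Measurable u := hu.measurable
  have hint : ∀ a : ∀ k, S k, Integrable u (Measure.dirac a) := by
    intro a
    refine ⟨hu.aestronglyMeasurable, ?_⟩
    have : (∫⁻ x, (‖u x‖₊ : ℝ≥0∞) ∂Measure.dirac a) < ⊤ := by
      rw [lintegral_dirac' _ (measurable_coe_nnreal_ennreal_iff.mpr humeas.nnnorm)]
      exact ENNReal.coe_lt_top
    exact this
  have hprob : ∀ f : Fin n → (∀ k, S k),
      IsProbabilityMeasure
        ((E.card : ℝ≥0∞)⁻¹ • ∑ j ∈ E, Measure.dirac (f j)) := by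
    intro f
    constructor
    rw [Measure.smul_apply, Measure.finset_sum_apply]
    simp only [Measure.dirac_apply_of_mem (Set.mem_univ _), Finset.sum_const,
      nsmul_eq_mul, mul_one, smul_eq_mul]
    exact ENNReal.inv_mul_cancel (by exact_mod_cast hcard_pos.ne')
      (ENNReal.natCast_ne_top _)
  have hintsum : ∀ f : Fin n → (∀ k, S k),
      ∫ s, u s ∂((E.card : ℝ≥0∞)⁻¹ • ∑ j ∈ E, Measure.dirac (f j))
        = (E.card : ℝ)⁻¹ * ∑ j ∈ E, u (f j) := by
    intro f
    rw [integral_smul_measure, integral_finset_sum_measure (fun j _ => hint (f j))]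
    simp only [ENNReal.toReal_inv, ENNReal.toReal_natCast, smul_eq_mul]
    congr 1
    exact Finset.sum_congr rfl fun j _ => integral_dirac' u (f j) hu.stronglyMeasurable
  have hmap : ∀ (f : Fin n → ∀ k, S k) (j : Fin n),
      ((E.card : ℝ≥0∞)⁻¹ • ∑ j' ∈ E, Measure.dirac (f j')).map (fun s => (s i, s j))
        = (E.card : ℝ≥0∞)⁻¹ • ∑ j' ∈ E, Measure.dirac (f j' i, f j' j) := by
    intro f j
    have hg : Measurable fun s : ∀ k, S k => (s i, s j) :=
      (measurable_pi_apply i).prodMk (measurable_pi_apply j)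
    rw [Measure.map_smul, map_finset_sum17 hg]
    congr 1
    exact Finset.sum_congr rfl fun j' _ => Measure.map_dirac' hg (f j')
  refine ⟨fun j a b => u (Function.update (base a) j b) -
      ((E.card : ℝ) - 1) / E.card * u (base a), ?_, ?_⟩
  · intro j hj
    have hb : Continuous base := continuous_const.update i continuous_id
    exact (hu.comp ((hb.comp continuous_fst).update j continuous_snd)).sub
      (continuous_const.mul (hu.comp (hb.comp continuous_fst)))
  · intro s
    set t' : ∀ k, S k := base (s i) with ht'
    have hti : t' i = s i := hbasei (s i)
    have key : ∑ j' ∈ E, u (if j' = j0 then s else t')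
        = ∑ j' ∈ E, u (Function.update t' j' (s j')) := by
      have hintegral := hmarg _ _ (hprob fun j' => if j' = j0 then s else t')
        (hprob fun j' => Function.update t' j' (s j')) ?_
      · rw [hintsum, hintsum] at hintegral
        exact mul_left_cancel₀ (inv_ne_zero hcardR.ne') hintegral
      intro j hj
      rw [hmap, hmap]
      congr 1
      have hzl : ∀ j' ∈ E, Measure.dirac ((if j' = j0 then s else t') i,
            (if j' = j0 then s else t') j)
          = (if j' = j0 then Measure.dirac (s i, s j) else Measure.dirac (s i, t' j)) := by
        intro j' _
        by_cases h : j' = j0 <;> simp [h, hti]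
      have hwl : ∀ j' ∈ E, Measure.dirac (Function.update t' j' (s j') i,
            Function.update t' j' (s j') j)
          = (if j' = j then Measure.dirac (s i, s j) else Measure.dirac (s i, t' j)) := by
        intro j' hj'
        have hji : j' ≠ i := (Finset.mem_erase.mp hj').1
        by_cases h : j' = j
        · subst h
          rw [if_pos rfl, Function.update_of_ne (Ne.symm hji), hti, Function.update_self]
        · rw [if_neg h, Function.update_of_ne (Ne.symm hji), hti,
            Function.update_of_ne (Ne.symm h)]
      rw [Finset.sum_congr rfl hzl, Finset.sum_congr rfl hwl]
      exact sum_ite_point17 E hj0E (Finset.mem_erase.mpr ⟨hj, Finset.mem_univ _⟩) _ _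
    have hL : ∑ j' ∈ E, u (if j' = j0 then s else t')
        = u s + (E.card - 1) • u t' := by
      have hcongr : ∀ j' ∈ E, u (if j' = j0 then s else t')
          = (if j' = j0 then u s else u t') := by
        intro j' _
        by_cases h : j' = j0 <;> simp [h]
      rw [Finset.sum_congr rfl hcongr, sum_ite_eq_point17 E hj0E]
    have hkey : u s + ((E.card : ℝ) - 1) * u t'
        = ∑ j' ∈ E, u (Function.update t' j' (s j')) := by
      rw [← key, hL, nsmul_eq_mul, Nat.cast_sub hcard_pos, Nat.cast_one]
    rw [Finset.sum_sub_distrib, Finset.sum_const, ← hkey, nsmul_eq_mul]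
    field_simp
    rw [← ht']
    ring
end
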